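/- arXiv:2509.15850 — 7 statements merged into one kernel-verified Lean document; each statement's English description precedes it below -/
import Mathlib

section
/- Let V be a finite-dimensional real inner product space and let G be a subgroup of the group of linear isometric automorphisms of V. Suppose P is a finite normal subgroup of G that is generated by the reflections it contains. Then P has a complement in G: there exists a subgroup H of G such that P ∩ H is trivial and every element of G is a product of an element of P and an element of H (equivalently, P and H are complementary subgroups of G). -/
/-!
Let `Φ` be the finite set of unit roots of the reflections in `P`; since `G` normalises `P`, it
permutes `Φ`. Fix `v` orthogonal to no root and let `H` be the stabiliser in `G` of the positive
roots `{α ∈ Φ | 0 < ⟪v, α⟫}`. For `g ∈ G`, the `p ∈ P` maximising `⟪p (g v), v⟫` moves `g v` into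
the chamber of `v`, so `p g ∈ H`. That `P ∩ H = 1` is the simple transitivity of `P` on chambers:
a minimal set `Δ` of positive roots whose cone contains all positive roots is a simple system,
each `s_δ` (`δ ∈ Δ`) permutes the positive roots other than `δ`, these `s_δ` generate `P`, and by
the exchange condition a word in them that keeps every simple root positive is trivial.
-/

open scoped RealInnerProductSpace

variable {V : Type*} [NormedAddCommGroup V] [InnerProductSpace ℝ V] [FiniteDimensional ℝ V]

def IsReflection (r : V ≃ₗᵢ[ℝ] V) : Prop :=
  ∃ α : V, α ≠ 0 ∧ r α = -α ∧ ∀ v : V, ⟪α, v⟫ = 0 → r v = v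

section HyperplaneReflection

variable {E : Type*} [NormedAddCommGroup E] [InnerProductSpace ℝ E]

noncomputable def hyperplaneReflection (α : E) : E ≃ₗᵢ[ℝ] E := (ℝ ∙ α)ᗮ.reflection

theorem hyperplaneReflection_apply {α : E} (hα : ‖α‖ = 1) (x : E) :
    hyperplaneReflection α x = x - (2 * ⟪α, x⟫) • α := by
  rw [hyperplaneReflection, Submodule.reflection_apply, Submodule.starProjection_orthogonal_val,
    Submodule.starProjection_unit_singleton ℝ hα]
  module

theorem hyperplaneReflection_self (α : E) : hyperplaneReflection α α = -α :=
  Submodule.reflection_orthogonalComplement_singleton_eq_neg α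

theorem hyperplaneReflection_of_inner_eq_zero {α x : E} (hx : ⟪α, x⟫ = 0) :
    hyperplaneReflection α x = x :=
  Submodule.reflection_mem_subspace_eq_self
    (Submodule.mem_orthogonal_singleton_iff_inner_right.2 hx)

@[simp]
theorem hyperplaneReflection_hyperplaneReflection (α x : E) :
    hyperplaneReflection α (hyperplaneReflection α x) = x :=
  Submodule.reflection_reflection _ x

@[simp]
theorem hyperplaneReflection_mul_self (α : E) :
    hyperplaneReflection α * hyperplaneReflection α = 1 := by
  ext x
  exact hyperplaneReflection_hyperplaneReflection α x

@[simp]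
theorem hyperplaneReflection_inv (α : E) : (hyperplaneReflection α)⁻¹ = hyperplaneReflection α :=
  inv_eq_of_mul_eq_one_right (hyperplaneReflection_mul_self α)

theorem hyperplaneReflection_smul {c : ℝ} (hc : c ≠ 0) (α : E) :
    hyperplaneReflection (c • α) = hyperplaneReflection α := by
  simp only [hyperplaneReflection, Submodule.span_singleton_smul_eq hc.isUnit]

theorem hyperplaneReflection_neg (α : E) :
    hyperplaneReflection (-α) = hyperplaneReflection α := by
  rw [← neg_one_smul ℝ α, hyperplaneReflection_smul (by norm_num)]

theorem mul_hyperplaneReflection_mul_inv (g : E ≃ₗᵢ[ℝ] E) (α : E) :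
    g * hyperplaneReflection α * g⁻¹ = hyperplaneReflection (g α) := by
  have : (ℝ ∙ g α)ᗮ = (ℝ ∙ α)ᗮ.map (g.toLinearEquiv : E →ₗ[ℝ] E) := by
    rw [Submodule.map_orthogonal_equiv, Submodule.map_span, Set.image_singleton]
    rfl
  ext x
  simp only [hyperplaneReflection, this, Submodule.reflection_map_apply]
  rfl

theorem eq_hyperplaneReflection_of_apply_eq_neg {r : E ≃ₗᵢ[ℝ] E} {α : E} (hrα : r α = -α)
    (hfix : ∀ x, ⟪α, x⟫ = 0 → r x = x) : r = hyperplaneReflection α := by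
  ext x
  obtain ⟨y, hy, z, hz, rfl⟩ := (ℝ ∙ α).exists_add_mem_mem_orthogonal x
  obtain ⟨c, rfl⟩ := Submodule.mem_span_singleton.1 hy
  rw [Submodule.mem_orthogonal_singleton_iff_inner_right] at hz
  simp only [map_add, map_smul, hrα, hfix z hz, hyperplaneReflection_self,
    hyperplaneReflection_of_inner_eq_zero hz]

theorem eq_or_eq_neg_of_hyperplaneReflection_eq {α β : E} (hα : ‖α‖ = 1) (hβ : ‖β‖ = 1)
    (h : hyperplaneReflection α = hyperplaneReflection β) : β = α ∨ β = -α := by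
  have hβα : β = ⟪α, β⟫ • α := by
    have := hyperplaneReflection_apply hα β
    rw [h, hyperplaneReflection_self] at this
    linear_combination (norm := module) (-1 / 2 : ℝ) • this
  have hc : |⟪α, β⟫| = 1 := by
    have := congrArg norm hβα
    rwa [norm_smul, hα, hβ, Real.norm_eq_abs, mul_one, eq_comm] at this
  rcases abs_eq zero_le_one |>.1 hc with hc | hc
  · left; rw [hβα, hc, one_smul]
  · right; rw [hβα, hc, neg_one_smul]

theorem IsReflection.exists_eq_hyperplaneReflection {r : E ≃ₗᵢ[ℝ] E} (hr : IsReflection r) :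
    ∃ α : E, ‖α‖ = 1 ∧ r = hyperplaneReflection α := by
  obtain ⟨α, hα, hrα, hfix⟩ := hr
  refine ⟨‖α‖⁻¹ • α, norm_smul_inv_norm hα, ?_⟩
  rw [hyperplaneReflection_smul (inv_ne_zero (norm_ne_zero_iff.2 hα))]
  exact eq_hyperplaneReflection_of_apply_eq_neg hrα hfix

end HyperplaneReflection

section Cone

variable {E : Type*} [NormedAddCommGroup E] [InnerProductSpace ℝ E] {S : Set E} {v x : E}

theorem inner_pos_or_eq_zero_of_mem_hull (hS : ∀ γ ∈ S, 0 < ⟪v, γ⟫)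
    (hx : x ∈ PointedCone.hull ℝ S) : 0 < ⟪v, x⟫ ∨ x = 0 := by
  induction hx using Submodule.span_induction with
  | mem y hy => exact .inl (hS y hy)
  | zero => exact .inr rfl
  | add y z _ _ hy hz =>
    rcases hy, hz with ⟨hy | rfl, hz | rfl⟩
    · left; rw [inner_add_right]; positivity
    all_goals simp_all
  | smul c y _ hy =>
    obtain ⟨c, hc⟩ := c
    rw [Nonneg.mk_smul, real_inner_smul_right]
    rcases hc.lt_or_eq, hy with ⟨hc | rfl, hy | rfl⟩
    · left; positivity
    all_goals simp_all

theorem exists_inner_pos_of_mem_hull (hx : x ∈ PointedCone.hull ℝ S) (hx0 : x ≠ 0) :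
    ∃ γ ∈ S, 0 < ⟪γ, x⟫ := by
  by_contra! h
  have hle : ∀ y ∈ PointedCone.hull ℝ S, ⟪y, x⟫ ≤ 0 := by
    intro y hy
    induction hy using Submodule.span_induction with
    | mem y hy => exact h y hy
    | zero => simp
    | add y z _ _ hy hz => rw [inner_add_left]; linarith
    | smul c y _ hy =>
      obtain ⟨c, hc⟩ := c
      rw [Nonneg.mk_smul, real_inner_smul_left]
      exact mul_nonpos_of_nonneg_of_nonpos hc hy
  exact hx0 (real_inner_self_nonpos.1 (hle x hx))

/-- The ray through `δ` is a face of the cone spanned by `insert δ S`. -/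
theorem exists_eq_smul_of_add_eq_smul {δ y : E} {c : ℝ} (hS : ∀ γ ∈ S, 0 < ⟪v, γ⟫)
    (hδ : 0 < ⟪v, δ⟫) (hδS : δ ∉ PointedCone.hull ℝ S)
    (hx : x ∈ PointedCone.hull ℝ (insert δ S)) (hy : y ∈ PointedCone.hull ℝ (insert δ S))
    (hxy : x + y = c • δ) : ∃ a : ℝ, 0 ≤ a ∧ x = a • δ := by
  obtain ⟨⟨a, ha⟩, k, hk, rfl⟩ := Submodule.mem_span_insert.1 hx
  obtain ⟨⟨b, _⟩, l, hl, rfl⟩ := Submodule.mem_span_insert.1 hy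
  rw [Nonneg.mk_smul, Nonneg.mk_smul] at hxy
  have hkl : k + l = (c - a - b) • δ := by linear_combination (norm := module) hxy
  refine ⟨a, ha, ?_⟩
  rcases le_or_gt (c - a - b) 0 with ht | ht
  · have hvkl : ⟪v, k⟫ + ⟪v, l⟫ ≤ 0 := by
      rw [← inner_add_right, hkl, real_inner_smul_right]
      exact mul_nonpos_of_nonpos_of_nonneg ht hδ.le
    rcases inner_pos_or_eq_zero_of_mem_hull hS hk with hk' | rfl
    · rcases inner_pos_or_eq_zero_of_mem_hull hS hl with hl' | rfl
      · linarith
      · simp only [inner_zero_right, add_zero] at hvkl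
        linarith
    · simp [Nonneg.mk_smul]
  · refine absurd ?_ hδS
    have := Submodule.smul_mem _ (⟨(c - a - b)⁻¹, by positivity⟩ : {c : ℝ // 0 ≤ c})
      (add_mem hk hl)
    rwa [Nonneg.mk_smul, hkl, smul_smul, inv_mul_cancel₀ ht.ne', one_smul] at this

theorem exists_forall_inner_ne_zero (S : Finset E) (hS : ∀ α ∈ S, α ≠ 0) :
    ∃ v : E, ∀ α ∈ S, ⟪v, α⟫ ≠ 0 := by
  by_contra! h
  have hcover : ⋃ α : S, ((ℝ ∙ (α : E))ᗮ : Set E) = Set.univ := by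
    refine Set.eq_univ_of_forall fun x => ?_
    obtain ⟨α, hα, hxα⟩ := h x
    refine Set.mem_iUnion.2 ⟨⟨α, hα⟩, ?_⟩
    rw [SetLike.mem_coe, Submodule.mem_orthogonal_singleton_iff_inner_right, real_inner_comm]
    exact hxα
  obtain ⟨⟨α, hα⟩, htop⟩ := Subspace.exists_eq_top_of_iUnion_eq_univ hcover
  have hαα : α ∈ (ℝ ∙ α)ᗮ := htop ▸ Submodule.mem_top
  exact hS α hα (inner_self_eq_zero.1 (Submodule.mem_orthogonal_singleton_iff_inner_right.1 hαα))

end Cone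

theorem exists_list_prod_eq_of_mem_closure {G : Type*} [Group G] {S : Set G}
    (hS : ∀ s ∈ S, s⁻¹ ∈ S) {w : G} (hw : w ∈ Subgroup.closure S) :
    ∃ l : List G, (∀ r ∈ l, r ∈ S) ∧ l.prod = w := by
  induction hw using Subgroup.closure_induction_left with
  | one => exact ⟨[], by simp, rfl⟩
  | mul_left x hx y _ ih =>
    obtain ⟨l, hl, rfl⟩ := ih
    exact ⟨x :: l, List.forall_mem_cons.2 ⟨hx, hl⟩, List.prod_cons⟩
  | inv_mul_cancel x hx y _ ih =>
    obtain ⟨l, hl, rfl⟩ := ih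
    exact ⟨x⁻¹ :: l, List.forall_mem_cons.2 ⟨hS x hx, hl⟩, List.prod_cons⟩

section RootSet

variable {E : Type*} [NormedAddCommGroup E] [InnerProductSpace ℝ E]

structure IsRootSet (Φ : Finset E) : Prop where
  norm_eq_one : ∀ α ∈ Φ, ‖α‖ = 1
  hyperplaneReflection_mem : ∀ α ∈ Φ, ∀ β ∈ Φ, hyperplaneReflection α β ∈ Φ

noncomputable def posRoots (Φ : Finset E) (v : E) : Finset E := Φ.filter fun α => 0 < ⟪v, α⟫

structure IsSimpleSystem (Φ : Finset E) (v : E) (Δ : Finset E) : Prop where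
  subset_posRoots : Δ ⊆ posRoots Φ v
  mem_hull : ∀ β ∈ posRoots Φ v, β ∈ PointedCone.hull ℝ (Δ : Set E)
  notMem_hull_diff : ∀ δ ∈ Δ, δ ∉ PointedCone.hull ℝ ((Δ : Set E) \ {δ})

variable {Φ Δ : Finset E} {v α β δ : E}

theorem mem_posRoots : α ∈ posRoots Φ v ↔ α ∈ Φ ∧ 0 < ⟪v, α⟫ := Finset.mem_filter

theorem IsSimpleSystem.subset (hΔ : IsSimpleSystem Φ v Δ) : Δ ⊆ Φ :=
  hΔ.subset_posRoots.trans (Finset.filter_subset _ _)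

theorem IsRootSet.ne_zero (hΦ : IsRootSet Φ) (hα : α ∈ Φ) : α ≠ 0 :=
  norm_ne_zero_iff.1 (by simp [hΦ.norm_eq_one α hα])

theorem IsRootSet.neg_mem (hΦ : IsRootSet Φ) (hα : α ∈ Φ) : -α ∈ Φ := by
  simpa [hyperplaneReflection_self] using hΦ.hyperplaneReflection_mem α hα α hα

theorem IsRootSet.neg_mem_posRoots (hΦ : IsRootSet Φ) (hα : α ∈ Φ) (hvα : ⟪v, α⟫ < 0) :
    -α ∈ posRoots Φ v :=
  mem_posRoots.2 ⟨hΦ.neg_mem hα, by rw [inner_neg_right]; linarith⟩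

theorem exists_isSimpleSystem (Φ : Finset E) (v : E) : ∃ Δ, IsSimpleSystem Φ v Δ := by
  classical
  obtain ⟨Δ, hΔ⟩ := Finset.exists_minimal
    (s := (posRoots Φ v).powerset.filter fun Δ : Finset E =>
      ∀ β ∈ posRoots Φ v, β ∈ PointedCone.hull ℝ (Δ : Set E))
    ⟨posRoots Φ v, by
      simpa using fun β hβ => PointedCone.subset_hull (R := ℝ) (Finset.mem_coe.2 hβ)⟩
  simp only [Finset.mem_filter, Finset.mem_powerset] at hΔ
  refine ⟨Δ, hΔ.prop.1, hΔ.prop.2, fun δ hδ hδΔ => ?_⟩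
  have hle : PointedCone.hull ℝ (Δ : Set E) ≤ PointedCone.hull ℝ (Δ.erase δ : Set E) := by
    refine Submodule.span_le.2 fun γ hγ => ?_
    by_cases hγδ : γ = δ
    · rwa [hγδ, Finset.coe_erase]
    · exact Submodule.subset_span (Finset.mem_erase.2 ⟨hγδ, hγ⟩)
  have := hΔ.2 ⟨(Finset.erase_subset δ Δ).trans hΔ.prop.1, fun β hβ => hle (hΔ.prop.2 β hβ)⟩
    (Finset.erase_subset δ Δ)
  exact Finset.notMem_erase δ Δ (this hδ)

theorem IsSimpleSystem.hyperplaneReflection_mem_posRoots (hΦ : IsRootSet Φ)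
    (hv : ∀ α ∈ Φ, ⟪v, α⟫ ≠ 0) (hΔ : IsSimpleSystem Φ v Δ) (hδ : δ ∈ Δ)
    (hβ : β ∈ posRoots Φ v) (hβδ : β ≠ δ) : hyperplaneReflection δ β ∈ posRoots Φ v := by
  obtain ⟨hδΦ, hδv⟩ := mem_posRoots.1 (hΔ.subset_posRoots hδ)
  have hβΦ := (mem_posRoots.1 hβ).1
  have hγΦ := hΦ.hyperplaneReflection_mem δ hδΦ β hβΦ
  refine mem_posRoots.2 ⟨hγΦ, (hv _ hγΦ).lt_or_gt.resolve_left fun hγv => hβδ ?_⟩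
  have hΔδ : insert δ ((Δ : Set E) \ {δ}) = Δ := Set.insert_sdiff_self_of_mem hδ
  have hsum : β + -hyperplaneReflection δ β = (2 * ⟪δ, β⟫) • δ := by
    rw [hyperplaneReflection_apply (hΦ.norm_eq_one δ hδΦ)]
    module
  obtain ⟨a, ha, rfl⟩ := exists_eq_smul_of_add_eq_smul
    (fun γ hγ => (mem_posRoots.1 (hΔ.subset_posRoots hγ.1)).2) hδv (hΔ.notMem_hull_diff δ hδ)
    (by rw [hΔδ]; exact hΔ.mem_hull β hβ)
    (by rw [hΔδ]; exact hΔ.mem_hull _ (hΦ.neg_mem_posRoots hγΦ hγv)) hsum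
  have := hΦ.norm_eq_one _ hβΦ
  rw [norm_smul, hΦ.norm_eq_one δ hδΦ, Real.norm_of_nonneg ha, mul_one] at this
  rw [this, one_smul]

theorem IsSimpleSystem.hyperplaneReflection_mem_closure (hΦ : IsRootSet Φ)
    (hv : ∀ α ∈ Φ, ⟪v, α⟫ ≠ 0) (hΔ : IsSimpleSystem Φ v Δ) (hβ : β ∈ posRoots Φ v) :
    hyperplaneReflection β ∈ Subgroup.closure (hyperplaneReflection '' Δ) := by
  -- induction on the height `⟪v, β⟫`: a simple root `δ` with `0 < ⟪δ, β⟫` lowers it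
  induction hn : (Φ.filter fun γ => ⟪v, γ⟫ < ⟪v, β⟫).card using Nat.strong_induction_on
    generalizing β with
  | _ n ih =>
  obtain ⟨hβΦ, hβv⟩ := mem_posRoots.1 hβ
  obtain ⟨δ, hδ, hδβ⟩ := exists_inner_pos_of_mem_hull (hΔ.mem_hull β hβ) (hΦ.ne_zero hβΦ)
  obtain ⟨hδΦ, hδv⟩ := mem_posRoots.1 (hΔ.subset_posRoots hδ)
  by_cases hβδ : β = δ
  · exact Subgroup.subset_closure ⟨δ, hδ, hβδ ▸ rfl⟩
  set β' := hyperplaneReflection δ β with hβ'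
  have hlt : ⟪v, β'⟫ < ⟪v, β⟫ := by
    rw [hβ', hyperplaneReflection_apply (hΦ.norm_eq_one δ hδΦ), inner_sub_right,
      real_inner_smul_right]
    nlinarith
  have hcard : (Φ.filter fun γ => ⟪v, γ⟫ < ⟪v, β'⟫).card < n := by
    refine hn ▸ Finset.card_lt_card ((Finset.ssubset_iff_of_subset fun γ hγ => ?_).2
      ⟨β', ?_, ?_⟩)
    · simp only [Finset.mem_filter] at hγ ⊢
      exact ⟨hγ.1, hγ.2.trans hlt⟩
    · exact Finset.mem_filter.2 ⟨hΦ.hyperplaneReflection_mem δ hδΦ β hβΦ, hlt⟩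
    · simp
  have hδW : hyperplaneReflection δ ∈ Subgroup.closure (hyperplaneReflection '' Δ) :=
    Subgroup.subset_closure ⟨δ, hδ, rfl⟩
  have hconj : hyperplaneReflection β =
      hyperplaneReflection δ * hyperplaneReflection β' * (hyperplaneReflection δ)⁻¹ := by
    rw [mul_hyperplaneReflection_mul_inv, hβ', hyperplaneReflection_hyperplaneReflection]
  rw [hconj]
  exact mul_mem (mul_mem hδW (ih _ hcard
    (hΔ.hyperplaneReflection_mem_posRoots hΦ hv hδ hβ hβδ) rfl)) (inv_mem hδW)

theorem IsRootSet.list_prod_apply_mem (hΦ : IsRootSet Φ) {l : List (E ≃ₗᵢ[ℝ] E)}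
    (hl : ∀ r ∈ l, r ∈ hyperplaneReflection '' (Φ : Set E)) (hα : α ∈ Φ) : l.prod α ∈ Φ := by
  induction l with
  | nil => simpa
  | cons r t ih =>
    obtain ⟨⟨γ, hγ, rfl⟩, ht⟩ := List.forall_mem_cons.1 hl
    exact hΦ.hyperplaneReflection_mem γ hγ _ (ih ht)

/-- The exchange condition: peel letters off `l` until `α` has become the root of the next
letter, which then cancels against `s_α` by conjugation. -/
theorem IsSimpleSystem.exists_list_prod_eq_mul (hΦ : IsRootSet Φ) (hv : ∀ α ∈ Φ, ⟪v, α⟫ ≠ 0)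
    (hΔ : IsSimpleSystem Φ v Δ) (hα : α ∈ Δ) {l : List (E ≃ₗᵢ[ℝ] E)}
    (hl : ∀ r ∈ l, r ∈ hyperplaneReflection '' (Δ : Set E)) (hneg : ⟪v, l.prod α⟫ < 0) :
    ∃ l' : List (E ≃ₗᵢ[ℝ] E), (∀ r ∈ l', r ∈ hyperplaneReflection '' (Δ : Set E)) ∧
      l'.length < l.length ∧ l'.prod = l.prod * hyperplaneReflection α := by
  induction l with
  | nil => exact absurd hneg (mem_posRoots.1 (hΔ.subset_posRoots hα)).2.not_gt
  | cons r t ih =>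
    obtain ⟨⟨γ, hγ, rfl⟩, ht⟩ := List.forall_mem_cons.1 hl
    rw [List.prod_cons] at hneg ⊢
    have htα : t.prod α ∈ Φ := hΦ.list_prod_apply_mem
      (fun r hr => Set.image_mono (Finset.coe_subset.2 hΔ.subset) (ht r hr)) (hΔ.subset hα)
    rcases (hv _ htα).lt_or_gt with htα_neg | htα_pos
    · obtain ⟨t', ht', hlen, heq⟩ := ih ht htα_neg
      refine ⟨hyperplaneReflection γ :: t', List.forall_mem_cons.2 ⟨⟨γ, hγ, rfl⟩, ht'⟩,
        by simpa using hlen, by rw [List.prod_cons, heq, mul_assoc]⟩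
    · have htαγ : t.prod α = γ := by
        by_contra hne
        exact hneg.not_gt (mem_posRoots.1 (hΔ.hyperplaneReflection_mem_posRoots hΦ hv hγ
          (mem_posRoots.2 ⟨htα, htα_pos⟩) hne)).2
      refine ⟨t, ht, by simp, ?_⟩
      rw [← htαγ, ← mul_hyperplaneReflection_mul_inv]
      simp [mul_assoc]

theorem IsSimpleSystem.list_prod_eq_one (hΦ : IsRootSet Φ) (hv : ∀ α ∈ Φ, ⟪v, α⟫ ≠ 0)
    (hΔ : IsSimpleSystem Φ v Δ) {l : List (E ≃ₗᵢ[ℝ] E)}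
    (hl : ∀ r ∈ l, r ∈ hyperplaneReflection '' (Δ : Set E))
    (hpos : ∀ α ∈ Δ, 0 < ⟪v, l.prod α⟫) : l.prod = 1 := by
  induction hn : l.length using Nat.strong_induction_on generalizing l with
  | _ n ih =>
  rcases l.eq_nil_or_concat' with rfl | ⟨t, r, rfl⟩
  · rfl
  obtain ⟨α, hα, rfl⟩ := hl r (by simp)
  have hprod : t.prod = (t ++ [hyperplaneReflection α]).prod * hyperplaneReflection α := by
    simp [mul_assoc]
  have hneg : ⟪v, t.prod α⟫ < 0 := by
    rw [hprod, LinearIsometryEquiv.coe_mul, Function.comp_apply, hyperplaneReflection_self,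
      map_neg, inner_neg_right]
    linarith [hpos α hα]
  obtain ⟨t', ht', hlen, heq⟩ := hΔ.exists_list_prod_eq_mul hΦ hv hα
    (fun r hr => hl r (List.mem_append_left _ hr)) hneg
  rw [hprod, mul_assoc, hyperplaneReflection_mul_self, mul_one] at heq
  rw [← heq]
  exact ih t'.length (by simp at hn; omega) ht' (heq ▸ hpos) rfl

theorem IsRootSet.eq_one_of_mem_closure (hΦ : IsRootSet Φ) (hv : ∀ α ∈ Φ, ⟪v, α⟫ ≠ 0)
    {w : E ≃ₗᵢ[ℝ] E} (hw : w ∈ Subgroup.closure (hyperplaneReflection '' (Φ : Set E)))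
    (hpos : Set.MapsTo w (posRoots Φ v) (posRoots Φ v)) : w = 1 := by
  obtain ⟨Δ, hΔ⟩ := exists_isSimpleSystem Φ v
  have hle : Subgroup.closure (hyperplaneReflection '' (Φ : Set E)) ≤
      Subgroup.closure (hyperplaneReflection '' (Δ : Set E)) := by
    refine (Subgroup.closure_le _).2 ?_
    rintro _ ⟨α, hα, rfl⟩
    rcases (hv α hα).lt_or_gt with hαv | hαv
    · rw [← hyperplaneReflection_neg]
      exact hΔ.hyperplaneReflection_mem_closure hΦ hv (hΦ.neg_mem_posRoots hα hαv)
    · exact hΔ.hyperplaneReflection_mem_closure hΦ hv (mem_posRoots.2 ⟨hα, hαv⟩)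
  obtain ⟨l, hl, rfl⟩ := exists_list_prod_eq_of_mem_closure
    (by rintro _ ⟨δ, hδ, rfl⟩; exact ⟨δ, hδ, hyperplaneReflection_inv δ⟩) (hle hw)
  exact hΔ.list_prod_eq_one hΦ hv hl fun α hα => (mem_posRoots.1 (hpos (hΔ.subset_posRoots hα))).2

end RootSet

section ReflectionSubgroup

variable {E : Type*} [NormedAddCommGroup E] [InnerProductSpace ℝ E]
  {P : Subgroup (E ≃ₗᵢ[ℝ] E)} {g : E ≃ₗᵢ[ℝ] E} {α : E}

def rootsOf (P : Subgroup (E ≃ₗᵢ[ℝ] E)) : Set E := {α | ‖α‖ = 1 ∧ hyperplaneReflection α ∈ P}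

theorem apply_mem_rootsOf (hg : ∀ p ∈ P, g * p * g⁻¹ ∈ P) (hα : α ∈ rootsOf P) :
    g α ∈ rootsOf P :=
  ⟨by rw [g.norm_map, hα.1], mul_hyperplaneReflection_mul_inv g α ▸ hg _ hα.2⟩

theorem finite_rootsOf (hP : (P : Set (E ≃ₗᵢ[ℝ] E)).Finite) : (rootsOf P).Finite := by
  have hfiber (p : E ≃ₗᵢ[ℝ] E) : {α : E | ‖α‖ = 1 ∧ hyperplaneReflection α = p}.Finite := by
    rcases Set.eq_empty_or_nonempty {α : E | ‖α‖ = 1 ∧ hyperplaneReflection α = p}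
      with h | ⟨α₀, hα₀, rfl⟩
    · exact h ▸ Set.finite_empty
    refine (Set.toFinite {α₀, -α₀}).subset fun α ⟨hα, hαα₀⟩ => ?_
    exact eq_or_eq_neg_of_hyperplaneReflection_eq hα₀ hα hαα₀.symm
  refine (hP.biUnion fun p _ => hfiber p).subset fun α hα => ?_
  exact Set.mem_biUnion hα.2 ⟨hα.1, rfl⟩

theorem apply_mem_rootsOf_of_mem {p : E ≃ₗᵢ[ℝ] E} (hp : p ∈ P) (hα : α ∈ rootsOf P) :
    p α ∈ rootsOf P :=
  apply_mem_rootsOf (fun _ hq => mul_mem (mul_mem hp hq) (inv_mem hp)) hα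

theorem isRootSet_rootsOf (hP : (P : Set (E ≃ₗᵢ[ℝ] E)).Finite) :
    IsRootSet (finite_rootsOf hP).toFinset := by
  constructor <;> simp only [Set.Finite.mem_toFinset]
  · exact fun α hα => hα.1
  · exact fun α hα β hβ => apply_mem_rootsOf_of_mem hα.2 hβ

/-- The `p` maximising `⟪p x, v⟫` works: a reflection `s_β` with `⟪p x, β⟫ < 0 < ⟪v, β⟫` would
increase it. -/
theorem exists_mem_forall_inner_nonneg (hP : (P : Set (E ≃ₗᵢ[ℝ] E)).Finite) (v x : E) :
    ∃ p ∈ P, ∀ β ∈ rootsOf P, 0 < ⟪v, β⟫ → 0 ≤ ⟪p x, β⟫ := by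
  obtain ⟨p, hp, hmax⟩ := Set.exists_max_image _ (fun p : E ≃ₗᵢ[ℝ] E => ⟪p x, v⟫) hP
    ⟨1, one_mem P⟩
  refine ⟨p, hp, fun β ⟨hβ, hβP⟩ hβv => not_lt.1 fun hneg => ?_⟩
  have := hmax _ (mul_mem hβP hp)
  rw [LinearIsometryEquiv.coe_mul, Function.comp_apply, hyperplaneReflection_apply hβ,
    inner_sub_left, real_inner_smul_left, real_inner_comm (p x) β, real_inner_comm v β] at this
  nlinarith

def setStabilizer (S : Set E) : Subgroup (E ≃ₗᵢ[ℝ] E) where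
  carrier := {g | g '' S = S}
  mul_mem' {a b} (ha : a '' S = S) (hb : b '' S = S) := by
    change ⇑(a * b) '' S = S
    rw [LinearIsometryEquiv.coe_mul, Set.image_comp, hb, ha]
  one_mem' := Set.image_id S
  inv_mem' {g} (hg : g '' S = S) := by
    change ⇑g⁻¹ '' S = S
    conv_lhs => rw [← hg]
    simp [Set.image_image]

theorem mem_setStabilizer {S : Set E} : g ∈ setStabilizer S ↔ g '' S = S := Iff.rfl

theorem mem_setStabilizer_of_mapsTo {S : Set E} (hS : S.Finite) (hg : Set.MapsTo g S S) :
    g ∈ setStabilizer S :=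
  ((hS.injOn_iff_bijOn_of_mapsTo hg).1 g.injective.injOn).image_eq

theorem exists_mem_mul_mem_setStabilizer (hP : (P : Set (E ≃ₗᵢ[ℝ] E)).Finite) {v : E}
    (hv : ∀ α ∈ rootsOf P, ⟪v, α⟫ ≠ 0) (hg : ∀ α ∈ rootsOf P, g⁻¹ α ∈ rootsOf P) :
    ∃ p ∈ P, p * g ∈ setStabilizer (posRoots (finite_rootsOf hP).toFinset v) := by
  obtain ⟨p, hp, hpg⟩ := exists_mem_forall_inner_nonneg hP v (g v)
  refine ⟨p, hp, inv_mem_iff.1 (mem_setStabilizer_of_mapsTo (Finset.finite_toSet _)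
    fun β hβ => ?_)⟩
  simp only [Finset.mem_coe, mem_posRoots, Set.Finite.mem_toFinset] at hβ ⊢
  have hqβ : (p * g)⁻¹ β ∈ rootsOf P := hg _ (apply_mem_rootsOf_of_mem (inv_mem hp) hβ.1)
  refine ⟨hqβ, lt_of_le_of_ne ?_ (hv _ hqβ).symm⟩
  rw [← (p * g).inner_map_map]
  simpa using hpg β hβ.1 hβ.2

theorem le_closure_rootsOf {P : Subgroup (E ≃ₗᵢ[ℝ] E)}
    (hPgen : P = Subgroup.closure {r : E ≃ₗᵢ[ℝ] E | r ∈ P ∧ IsReflection r}) :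
    P ≤ Subgroup.closure (hyperplaneReflection '' rootsOf P) := by
  conv_lhs => rw [hPgen]
  refine Subgroup.closure_mono ?_
  rintro r ⟨hrP, hr⟩
  obtain ⟨α, hα, rfl⟩ := hr.exists_eq_hyperplaneReflection
  exact ⟨α, ⟨hα, hrP⟩, rfl⟩

end ReflectionSubgroup

/-- **Howlett's Lemma.** If `P` is a finite normal subgroup of a group `G` of linear
isometric automorphisms of `V` that is generated by the reflections it contains, then
`P` has a complement `H` in `G`. -/
theorem howlett_lemma (G P : Subgroup (V ≃ₗᵢ[ℝ] V))
    (hPG : P ≤ G)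
    (hPnormal : ∀ g ∈ G, ∀ p ∈ P, g * p * g⁻¹ ∈ P)
    (hPfin : (P : Set (V ≃ₗᵢ[ℝ] V)).Finite)
    (hPgen : P = Subgroup.closure {r : V ≃ₗᵢ[ℝ] V | r ∈ P ∧ IsReflection r}) :
    ∃ H : Subgroup (V ≃ₗᵢ[ℝ] V), H ≤ G ∧ P ⊓ H = ⊥ ∧
      ∀ g ∈ G, ∃ p ∈ P, ∃ h ∈ H, g = p * h := by
  set Φ := (finite_rootsOf hPfin).toFinset
  have hΦ : IsRootSet Φ := isRootSet_rootsOf hPfin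
  obtain ⟨v, hv⟩ := exists_forall_inner_ne_zero Φ fun α => hΦ.ne_zero
  refine ⟨G ⊓ setStabilizer (posRoots Φ v), inf_le_left, ?_, fun g hg => ?_⟩
  · refine (Subgroup.eq_bot_iff_forall _).2 fun w hw => ?_
    rw [Subgroup.mem_inf, Subgroup.mem_inf, mem_setStabilizer] at hw
    obtain ⟨hwP, -, hwΦ⟩ := hw
    exact hΦ.eq_one_of_mem_closure hv (by simpa [Φ] using le_closure_rootsOf hPgen hwP)
      (Set.mapsTo_iff_image_subset.2 hwΦ.subset)
  · obtain ⟨p, hp, hpg⟩ := exists_mem_mul_mem_setStabilizer hPfin (by simpa [Φ] using hv)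
      fun α => apply_mem_rootsOf (hPnormal _ (inv_mem hg))
    exact ⟨p⁻¹, inv_mem hp, p * g, Subgroup.mem_inf.2 ⟨mul_mem (hPG hp) hg, hpg⟩, by group⟩
end

section
/- A parabolic subgroup P of W is orthogonally closed (i.e., P°° = P) if and only if there exists a set R of roots of W (nonzero vectors α ∈ V such that the orthogonal reflection with root α lies in W) with P = Z_W(R), the pointwise stabilizer of R in W. -/
/-!
Two distinct reflections commute exactly when their roots are orthogonal. Hence, once we know
Steinberg's theorem (the pointwise stabilizer in `W` of any set of vectors is generated by the
reflections it contains), the orthogonal complement `U°` of any subgroup `U` is the pointwise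
stabilizer of the roots of the reflections in `U`, and both implications follow.

Steinberg's theorem is proved by induction on the codimension of the fixed space of `w`: if
`w ≠ 1`, some root `α` is orthogonal to that fixed space, `α = w v - v` for some `v`, and the
reflection along `α` composed with `w` fixes `v` as well as the fixed space of `w`. The root
exists because otherwise `w` would fix a point lying on no reflecting hyperplane, and such a point
has trivial stabilizer. This last fact uses a simple system: a minimal set of positive roots whose
cone contains all positive roots. Each simple reflection permutes the other positive roots, the
simple reflections generate `W`, and a word in them mapping positive roots to positive roots can
be shortened until it is empty.
-/

open scoped RealInnerProductSpace

variable {V : Type*} [NormedAddCommGroup V] [InnerProductSpace ℝ V] [FiniteDimensional ℝ V]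

/-- The pointwise stabilizer in `W` of a set `s ⊆ V`. -/
def pointwiseStabilizer (W : Subgroup (V ≃ₗᵢ[ℝ] V)) (s : Set V) : Subgroup (V ≃ₗᵢ[ℝ] V) where
  carrier := {w | w ∈ W ∧ ∀ v ∈ s, w v = v}
  one_mem' := ⟨W.one_mem, fun v _ => rfl⟩
  mul_mem' := fun {a b} ha hb => ⟨W.mul_mem ha.1 hb.1, fun v hv => by
    have h : (a * b) v = a (b v) := rfl
    rw [h, hb.2 v hv, ha.2 v hv]⟩
  inv_mem' := fun {a} ha => ⟨W.inv_mem ha.1, fun v hv => by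
    show a.symm v = v
    conv_lhs => rw [← ha.2 v hv]
    exact a.symm_apply_apply v⟩

/-- The set of reflections lying in `W`. -/
def reflectionsIn (W : Subgroup (V ≃ₗᵢ[ℝ] V)) : Set (V ≃ₗᵢ[ℝ] V) :=
  {t | t ∈ W ∧ IsReflection t}

/-- The orthogonal complement `U°` of a subgroup `U` of `W`: the subgroup generated by the
reflections of `W` that commute with, and differ from, every reflection of `W` lying in `U`. -/
def orthogonalComplement (W U : Subgroup (V ≃ₗᵢ[ℝ] V)) : Subgroup (V ≃ₗᵢ[ℝ] V) :=
  Subgroup.closure {t | t ∈ reflectionsIn W ∧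
    ∀ s ∈ reflectionsIn W, s ∈ U → t * s = s * t ∧ t ≠ s}

open Submodule

section

variable {E : Type*} [NormedAddCommGroup E] [InnerProductSpace ℝ E] {W : Subgroup (E ≃ₗᵢ[ℝ] E)}

noncomputable abbrev rootReflection (α : E) : E ≃ₗᵢ[ℝ] E := (ℝ ∙ α)ᗮ.reflection

theorem rootReflection_apply (α v : E) :
    rootReflection α v = v - (2 * ⟪α, v⟫ / ‖α‖ ^ 2) • α := by
  rw [reflection_orthogonal_apply, reflection_singleton_apply]
  module

theorem rootReflection_apply_of_norm_eq_one {α : E} (hα : ‖α‖ = 1) (v : E) :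
    rootReflection α v = v - (2 * ⟪α, v⟫) • α := by
  rw [rootReflection_apply, hα, one_pow, div_one]

theorem rootReflection_self (α : E) : rootReflection α α = -α :=
  reflection_orthogonalComplement_singleton_eq_neg α

theorem rootReflection_apply_eq_self_iff {α v : E} : rootReflection α v = v ↔ ⟪α, v⟫ = 0 := by
  rw [reflection_eq_self_iff, mem_orthogonal_singleton_iff_inner_right]

theorem rootReflection_apply_eq_self_comm {α β : E} :
    rootReflection α β = β ↔ rootReflection β α = α := by
  rw [rootReflection_apply_eq_self_iff, rootReflection_apply_eq_self_iff, real_inner_comm]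

theorem rootReflection_apply_eq_neg_iff {α v : E} : rootReflection α v = -v ↔ v ∈ ℝ ∙ α := by
  rw [reflection_orthogonal_apply, neg_inj, reflection_eq_self_iff]

theorem rootReflection_mul_self (α : E) : rootReflection α * rootReflection α = 1 :=
  reflection_mul_reflection _

theorem eq_rootReflection {r : E ≃ₗᵢ[ℝ] E} {α : E} (hα : r α = -α)
    (hfix : ∀ v, ⟪α, v⟫ = 0 → r v = v) : r = rootReflection α := by
  ext v
  obtain ⟨y, hy, z, hz, rfl⟩ := (ℝ ∙ α).exists_add_mem_mem_orthogonal v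
  obtain ⟨c, rfl⟩ := mem_span_singleton.mp hy
  rw [mem_orthogonal_singleton_iff_inner_right] at hz
  rw [map_add, map_add, map_smul, map_smul, hα, rootReflection_self, hfix z hz,
    rootReflection_apply_eq_self_iff.mpr hz]

theorem eq_rootReflection_iff {r : E ≃ₗᵢ[ℝ] E} {α : E} :
    r = rootReflection α ↔ r α = -α ∧ ∀ v, ⟪α, v⟫ = 0 → r v = v := by
  refine ⟨?_, fun h => eq_rootReflection h.1 h.2⟩
  rintro rfl
  exact ⟨rootReflection_self α, fun v => rootReflection_apply_eq_self_iff.mpr⟩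

theorem rootReflection_apply_conj (w : E ≃ₗᵢ[ℝ] E) (α : E) :
    rootReflection (w α) = w * rootReflection α * w⁻¹ := by
  refine (eq_rootReflection ?_ fun v hv => ?_).symm
  · change w (rootReflection α (w.symm (w α))) = -w α
    rw [w.symm_apply_apply, rootReflection_self, map_neg]
  · change w (rootReflection α (w.symm v)) = v
    rw [rootReflection_apply_eq_self_iff.mpr, w.apply_symm_apply]
    rwa [← w.inner_map_map, w.apply_symm_apply]

theorem isReflection_iff {r : E ≃ₗᵢ[ℝ] E} : IsReflection r ↔ ∃ α ≠ 0, r = rootReflection α := by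
  simp only [IsReflection, eq_rootReflection_iff]

theorem rootReflection_smul {c : ℝ} (hc : c ≠ 0) (α : E) :
    rootReflection (c • α) = rootReflection α := by
  refine (eq_rootReflection ?_ fun v hv => ?_).symm
  · rw [map_smul, rootReflection_self, smul_neg]
  · rw [real_inner_smul_left, mul_eq_zero, or_iff_right hc] at hv
    exact rootReflection_apply_eq_self_iff.mpr hv

theorem rootReflection_neg (α : E) : rootReflection (-α) = rootReflection α := by
  rw [← neg_one_smul ℝ α, rootReflection_smul (by norm_num)]

theorem rootReflection_eq_of_mem_span {α β : E} (hα : α ≠ 0) (h : α ∈ ℝ ∙ β) :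
    rootReflection α = rootReflection β := by
  obtain ⟨c, rfl⟩ := mem_span_singleton.mp h
  exact rootReflection_smul (left_ne_zero_of_smul hα) β

theorem commute_and_ne_iff_inner_eq_zero {α : E} (hα : α ≠ 0) (β : E) :
    (rootReflection α * rootReflection β = rootReflection β * rootReflection α ∧
      rootReflection α ≠ rootReflection β) ↔ ⟪α, β⟫ = 0 := by
  constructor
  · rintro ⟨hcomm, hne⟩
    by_contra h
    -- `σ_α` conjugates `σ_β` to `σ_{σ_α β}`, so commuting puts `σ_α β` on the line `ℝ ∙ β`
    have hconj : rootReflection (rootReflection α β) = rootReflection β := by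
      rw [rootReflection_apply_conj, hcomm, mul_inv_cancel_right]
    have hmem : rootReflection α β ∈ ℝ ∙ β := by
      rw [← rootReflection_apply_eq_neg_iff, ← hconj, rootReflection_self]
    have hcoef : 2 * ⟪α, β⟫ / ‖α‖ ^ 2 ≠ 0 := by positivity
    have hαβ : α ∈ ℝ ∙ β := by
      have := sub_mem (mem_span_singleton_self β) hmem
      rwa [rootReflection_apply, sub_sub_cancel, smul_mem_iff _ hcoef] at this
    exact hne (rootReflection_eq_of_mem_span hα hαβ)
  · intro h
    have hβα : rootReflection β α = α :=
      rootReflection_apply_eq_self_iff.mpr (by rwa [real_inner_comm])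
    refine ⟨?_, fun heq => hα ?_⟩
    · have hconj := rootReflection_apply_conj (rootReflection β) α
      rw [hβα] at hconj
      conv_lhs => rw [hconj]
      group
    · have := rootReflection_self α
      rw [heq, hβα] at this
      linear_combination (norm := module) (2⁻¹ : ℝ) • this

theorem rootReflection_apply_eq_self_iff_commute_and_ne {α : E} (hα : α ≠ 0) (β : E) :
    rootReflection α β = β ↔
      rootReflection α * rootReflection β = rootReflection β * rootReflection α ∧
        rootReflection α ≠ rootReflection β :=
  rootReflection_apply_eq_self_iff.trans (commute_and_ne_iff_inner_eq_zero hα β).symm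

variable (W) in
def unitRoots : Set E := {α | ‖α‖ = 1 ∧ rootReflection α ∈ W}

theorem neg_mem_unitRoots {α : E} (h : α ∈ unitRoots W) : -α ∈ unitRoots W :=
  ⟨by rw [norm_neg, h.1], by rw [rootReflection_neg]; exact h.2⟩

theorem apply_mem_unitRoots {w : E ≃ₗᵢ[ℝ] E} (hw : w ∈ W) {α : E} (h : α ∈ unitRoots W) :
    w α ∈ unitRoots W := by
  refine ⟨by rw [w.norm_map, h.1], ?_⟩
  rw [rootReflection_apply_conj]
  exact W.mul_mem (W.mul_mem hw h.2) (W.inv_mem hw)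

theorem eq_or_eq_neg_of_rootReflection_eq {α β : E} (hα : ‖α‖ = 1) (hβ : ‖β‖ = 1)
    (h : rootReflection α = rootReflection β) : β = α ∨ β = -α := by
  have : β ∈ ℝ ∙ α := by rw [← rootReflection_apply_eq_neg_iff, h, rootReflection_self]
  obtain ⟨c, rfl⟩ := mem_span_singleton.mp this
  rw [norm_smul, hα, mul_one, Real.norm_eq_abs] at hβ
  rcases (abs_eq zero_le_one).mp hβ with rfl | rfl <;> simp

theorem unitRoots_finite (hW : (W : Set (E ≃ₗᵢ[ℝ] E)).Finite) : (unitRoots W).Finite := by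
  have hfiber (r : E ≃ₗᵢ[ℝ] E) : {α : E | ‖α‖ = 1 ∧ rootReflection α = r}.Finite := by
    rcases Set.eq_empty_or_nonempty {α : E | ‖α‖ = 1 ∧ rootReflection α = r} with h | ⟨α₀, hα₀, rfl⟩
    · exact h ▸ Set.finite_empty
    · exact (Set.toFinite {α₀, -α₀}).subset fun α hα =>
        eq_or_eq_neg_of_rootReflection_eq hα₀ hα.1 hα.2.symm
  exact (hW.biUnion fun r _ => hfiber r).subset fun α hα => Set.mem_biUnion hα.2 ⟨hα.1, rfl⟩

theorem exists_mem_unitRoots_of_isReflection {r : E ≃ₗᵢ[ℝ] E} (hrW : r ∈ W)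
    (hr : IsReflection r) : ∃ α ∈ unitRoots W, r = rootReflection α := by
  obtain ⟨α, hα, rfl⟩ := isReflection_iff.mp hr
  have hc : ‖α‖⁻¹ ≠ 0 := inv_ne_zero (norm_ne_zero_iff.mpr hα)
  refine ⟨‖α‖⁻¹ • α, ⟨norm_smul_inv_norm hα, ?_⟩, (rootReflection_smul hc α).symm⟩
  rwa [rootReflection_smul hc]

variable (W) in
def IsRegularPoint (p : E) : Prop := ∀ α ∈ unitRoots W, ⟪α, p⟫ ≠ 0

variable (W) in
def positiveRoots (p : E) : Set E := {α ∈ unitRoots W | 0 < ⟪α, p⟫}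

theorem positiveRoots_subset_unitRoots (p : E) : positiveRoots W p ⊆ unitRoots W :=
  fun _ h => h.1

theorem mem_positiveRoots_or_neg_mem {p α : E} (hp : IsRegularPoint W p) (hα : α ∈ unitRoots W) :
    α ∈ positiveRoots W p ∨ -α ∈ positiveRoots W p := by
  rcases (hp α hα).lt_or_gt with h | h
  · exact .inr ⟨neg_mem_unitRoots hα, by rw [inner_neg_left]; linarith⟩
  · exact .inl ⟨hα, h⟩

theorem exists_mem_forall_inner_ne_zero (F : Submodule ℝ E) {A : Set E} (hA : A.Finite)
    (h : ∀ α ∈ A, α ∉ Fᗮ) : ∃ p ∈ F, ∀ α ∈ A, ⟪α, p⟫ ≠ 0 := by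
  by_contra! hcover
  have : Finite A := hA
  obtain ⟨⟨α, hαA⟩, hα⟩ := Subspace.exists_eq_top_of_iUnion_eq_univ
    (p := fun α : A => (ℝ ∙ (α : E))ᗮ.comap F.subtype) <| by
      refine Set.eq_univ_of_forall fun x => ?_
      obtain ⟨α, hαA, hαx⟩ := hcover x x.2
      exact Set.mem_iUnion.mpr ⟨⟨α, hαA⟩, mem_orthogonal_singleton_iff_inner_right.mpr hαx⟩
  refine h α hαA ((mem_orthogonal' _ _).mpr fun u hu => ?_)
  have hu' : (⟨u, hu⟩ : F) ∈ (ℝ ∙ α)ᗮ.comap F.subtype := hα ▸ mem_top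
  exact mem_orthogonal_singleton_iff_inner_right.mp hu'

theorem inner_nonneg_of_mem_hull {S : Set E} {u x : E} (hS : ∀ δ ∈ S, 0 ≤ ⟪δ, u⟫)
    (hx : x ∈ PointedCone.hull ℝ S) : 0 ≤ ⟪x, u⟫ := by
  induction hx using Submodule.span_induction with
  | mem δ hδ => exact hS δ hδ
  | zero => rw [inner_zero_left]
  | add x y _ _ hx hy => rw [inner_add_left]; exact add_nonneg hx hy
  | smul c x _ hx => rw [← Nonneg.coe_smul, real_inner_smul_left]; exact mul_nonneg c.2 hx

theorem eq_zero_or_inner_pos_of_mem_hull {S : Set E} {p x : E} (hS : ∀ δ ∈ S, 0 < ⟪δ, p⟫)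
    (hx : x ∈ PointedCone.hull ℝ S) : x = 0 ∨ 0 < ⟪x, p⟫ := by
  induction hx using Submodule.span_induction with
  | mem δ hδ => exact .inr (hS δ hδ)
  | zero => exact .inl rfl
  | add x y _ _ hx hy =>
    rcases hx with rfl | hx
    · rwa [zero_add]
    rcases hy with rfl | hy
    · rw [add_zero]; exact .inr hx
    · rw [inner_add_left]; exact .inr (add_pos hx hy)
  | smul c x _ hx =>
    rw [← Nonneg.coe_smul, real_inner_smul_left]
    rcases hx with rfl | hx
    · exact .inl (smul_zero _)
    rcases c.2.eq_or_lt with hc | hc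
    · exact .inl (by rw [← hc, zero_smul])
    · exact .inr (mul_pos hc hx)

/-- `α` spans an extreme ray of the cone spanned by `S`. -/
theorem exists_nonneg_smul_of_add_eq_smul {S : Set E} {p α x y : E} {a : ℝ}
    (hS : ∀ δ ∈ S, 0 < ⟪δ, p⟫) (hα : α ∈ S) (hαS : α ∉ PointedCone.hull ℝ (S \ {α}))
    (hx : x ∈ PointedCone.hull ℝ S) (hy : y ∈ PointedCone.hull ℝ S) (hxy : x + y = a • α) :
    ∃ c : ℝ, 0 ≤ c ∧ x = c • α := by
  have hS' : ∀ δ ∈ S \ {α}, 0 < ⟪δ, p⟫ := fun δ hδ => hS δ hδ.1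
  rw [← Set.insert_eq_of_mem hα, ← Set.insert_sdiff_singleton] at hx hy
  obtain ⟨b, x', hx', rfl⟩ := mem_span_insert.mp hx
  obtain ⟨b', y', hy', rfl⟩ := mem_span_insert.mp hy
  rw [← Nonneg.coe_smul, ← Nonneg.coe_smul] at hxy
  have hsum : x' + y' = (a - b - b') • α := by linear_combination (norm := module) hxy
  refine ⟨b, b.2, ?_⟩
  suffices x' = 0 by rw [this, add_zero, Nonneg.coe_smul]
  rcases lt_or_ge 0 (a - b - b') with hpos | hnonpos
  · refine absurd ?_ hαS
    have := PointedCone.smul_mem _ (inv_nonneg.mpr hpos.le) (add_mem hx' hy')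
    rwa [hsum, smul_smul, inv_mul_cancel₀ hpos.ne', one_smul] at this
  · have hheight := congrArg (⟪·, p⟫) hsum
    simp only [inner_add_left, real_inner_smul_left] at hheight
    have hy'p := inner_nonneg_of_mem_hull (fun δ hδ => (hS' δ hδ).le) hy'
    refine (eq_zero_or_inner_pos_of_mem_hull hS' hx').resolve_right fun hx'p => ?_
    nlinarith [hS α hα]

variable {p : E} {Δ : Set E}

structure IsSimpleSystem_s7 (W : Subgroup (E ≃ₗᵢ[ℝ] E)) (p : E) (Δ : Set E) : Prop where
  subset_positiveRoots : Δ ⊆ positiveRoots W p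
  positiveRoots_subset_hull : positiveRoots W p ⊆ PointedCone.hull ℝ Δ
  notMem_hull_diff_singleton : ∀ α ∈ Δ, α ∉ PointedCone.hull ℝ (Δ \ {α})

theorem positiveRoots_finite (hW : (W : Set (E ≃ₗᵢ[ℝ] E)).Finite) (p : E) :
    (positiveRoots W p).Finite :=
  (unitRoots_finite hW).subset (positiveRoots_subset_unitRoots p)

theorem exists_isSimpleSystem_s7 (hW : (W : Set (E ≃ₗᵢ[ℝ] E)).Finite) (p : E) :
    ∃ Δ, IsSimpleSystem_s7 W p Δ := by
  obtain ⟨Δ, ⟨hsub, hspan⟩, hmin⟩ := Set.Finite.exists_minimal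
    (s := {Δ : Set E | Δ ⊆ positiveRoots W p ∧ positiveRoots W p ⊆ PointedCone.hull ℝ Δ})
    ((positiveRoots_finite hW p).finite_subsets.subset fun Δ h => h.1)
    ⟨_, subset_rfl, PointedCone.subset_hull⟩
  refine ⟨Δ, hsub, hspan, fun α hα hmem => ?_⟩
  have hle : PointedCone.hull ℝ Δ ≤ PointedCone.hull ℝ (Δ \ {α}) := span_le.mpr fun δ hδ => by
    by_cases h : δ = α
    · exact h ▸ hmem
    · exact subset_span ⟨hδ, h⟩
  exact (hmin ⟨Set.sdiff_subset.trans hsub, hspan.trans hle⟩ Set.sdiff_subset hα).2 rfl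

namespace IsSimpleSystem_s7

variable (hΔ : IsSimpleSystem_s7 W p Δ) (hp : IsRegularPoint W p)
include hΔ hp

theorem rootReflection_apply_mem {α β : E} (hα : α ∈ Δ) (hβ : β ∈ positiveRoots W p)
    (hne : β ≠ α) : rootReflection α β ∈ positiveRoots W p := by
  obtain ⟨⟨hα1, hαW⟩, -⟩ := hΔ.subset_positiveRoots hα
  refine (mem_positiveRoots_or_neg_mem hp (apply_mem_unitRoots hαW hβ.1)).resolve_right
    fun hneg => hne ?_
  have hsum : β + -rootReflection α β = (2 * ⟪α, β⟫) • α := by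
    rw [rootReflection_apply_of_norm_eq_one hα1]; abel
  obtain ⟨c, hc, rfl⟩ := exists_nonneg_smul_of_add_eq_smul
    (fun δ hδ => (hΔ.subset_positiveRoots hδ).2) hα (hΔ.notMem_hull_diff_singleton α hα)
    (hΔ.positiveRoots_subset_hull hβ) (hΔ.positiveRoots_subset_hull hneg) hsum
  have hc1 : ‖c • α‖ = 1 := hβ.1.1
  rw [norm_smul, hα1, mul_one, Real.norm_of_nonneg hc] at hc1
  rw [hc1, one_smul]

theorem rootReflection_mem_closure (hW : (W : Set (E ≃ₗᵢ[ℝ] E)).Finite) {β : E}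
    (hβ : β ∈ positiveRoots W p) : rootReflection β ∈ Subgroup.closure (rootReflection '' Δ) := by
  by_contra hβ'
  obtain ⟨β, ⟨hβ, hβ'⟩, hmin⟩ := Set.exists_min_image
    {β ∈ positiveRoots W p | rootReflection β ∉ Subgroup.closure (rootReflection '' Δ)}
    (⟪·, p⟫) ((positiveRoots_finite hW p).subset fun _ h => h.1) ⟨β, hβ, hβ'⟩
  have hβΔ : β ∉ Δ := fun h => hβ' (Subgroup.subset_closure (Set.mem_image_of_mem _ h))
  obtain ⟨δ, hδ, hδβ⟩ : ∃ δ ∈ Δ, 0 < ⟪δ, β⟫ := by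
    by_contra! h
    have := inner_nonneg_of_mem_hull (u := -β) (fun δ hδ => by
      rw [inner_neg_right]; linarith [h δ hδ]) (hΔ.positiveRoots_subset_hull hβ)
    rw [inner_neg_right, real_inner_self_eq_norm_sq, hβ.1.1] at this
    norm_num at this
  obtain ⟨⟨hδ1, -⟩, hδp⟩ := hΔ.subset_positiveRoots hδ
  -- `σ_δ β` is a positive root of smaller height, hence not a counterexample
  have hγ := hΔ.rootReflection_apply_mem hp hδ hβ (ne_of_mem_of_not_mem hδ hβΔ).symm
  have hγp : ⟪rootReflection δ β, p⟫ < ⟪β, p⟫ := by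
    rw [rootReflection_apply_of_norm_eq_one hδ1, inner_sub_left, real_inner_smul_left]
    nlinarith
  have hγmem : rootReflection (rootReflection δ β) ∈ Subgroup.closure (rootReflection '' Δ) :=
    by_contra fun h => (hmin _ ⟨hγ, h⟩).not_gt hγp
  have hδmem : rootReflection δ ∈ Subgroup.closure (rootReflection '' Δ) :=
    Subgroup.subset_closure (Set.mem_image_of_mem _ hδ)
  apply hβ'
  have hconj := rootReflection_apply_conj (rootReflection δ) (rootReflection δ β)
  rw [reflection_reflection] at hconj
  rw [hconj]
  exact mul_mem (mul_mem hδmem hγmem) (inv_mem hδmem)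

theorem le_closure (hW : (W : Set (E ≃ₗᵢ[ℝ] E)).Finite)
    (hWgen : W = Subgroup.closure {r : E ≃ₗᵢ[ℝ] E | r ∈ W ∧ IsReflection r}) :
    W ≤ Subgroup.closure (rootReflection '' Δ) := by
  rw [hWgen, Subgroup.closure_le]
  rintro r ⟨hrW, hr⟩
  obtain ⟨α, hα, rfl⟩ := exists_mem_unitRoots_of_isReflection hrW hr
  rcases mem_positiveRoots_or_neg_mem hp hα with h | h
  · exact hΔ.rootReflection_mem_closure hp hW h
  · rw [← rootReflection_neg]
    exact hΔ.rootReflection_mem_closure hp hW h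

theorem exists_shorter_word {δ : E} (hδ : δ ∈ Δ) (l : List (E ≃ₗᵢ[ℝ] E))
    (hl : ∀ s ∈ l, s ∈ rootReflection '' Δ) (hneg : l.prod δ ∉ positiveRoots W p) :
    ∃ l' : List (E ≃ₗᵢ[ℝ] E), (∀ s ∈ l', s ∈ rootReflection '' Δ) ∧
      l'.length + 1 = l.length ∧ l'.prod = l.prod * rootReflection δ := by
  induction l with
  | nil => exact absurd (hΔ.subset_positiveRoots hδ) hneg
  | cons s t ih =>
    obtain ⟨ε, hε, rfl⟩ := hl s List.mem_cons_self
    have ht : ∀ s ∈ t, s ∈ rootReflection '' Δ := fun s hs => hl s (List.mem_cons_of_mem _ hs)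
    rw [List.prod_cons] at hneg ⊢
    by_cases hpos : t.prod δ ∈ positiveRoots W p
    · -- `σ_ε` sends the positive root `t.prod δ` to a negative one, so the two are equal
      have hεδ : t.prod δ = ε := by_contra fun h => hneg (hΔ.rootReflection_apply_mem hp hε hpos h)
      refine ⟨t, ht, rfl, ?_⟩
      rw [← hεδ, rootReflection_apply_conj, inv_mul_cancel_right, mul_assoc,
        rootReflection_mul_self, mul_one]
    · obtain ⟨t', ht', hlen, hprod⟩ := ih ht hpos
      refine ⟨rootReflection ε :: t', ?_, by simp [hlen], by rw [List.prod_cons, hprod, mul_assoc]⟩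
      exact List.forall_mem_cons.mpr ⟨Set.mem_image_of_mem _ hε, ht'⟩

theorem eq_one_of_mapsTo {w : E ≃ₗᵢ[ℝ] E} (hw : w ∈ Subgroup.closure (rootReflection '' Δ))
    (hpos : Set.MapsTo w (positiveRoots W p) (positiveRoots W p)) : w = 1 := by
  have hfin : ∀ s ∈ rootReflection '' Δ, IsOfFinOrder s := by
    rintro _ ⟨α, -, rfl⟩
    exact isOfFinOrder_iff_pow_eq_one.mpr ⟨2, two_pos, by rw [sq, rootReflection_mul_self]⟩
  rw [← Subgroup.mem_toSubmonoid, Subgroup.closure_toSubmonoid_of_isOfFinOrder hfin] at hw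
  obtain ⟨l, hl, rfl⟩ := Submonoid.exists_list_of_mem_closure hw
  clear hw
  induction hn : l.length using Nat.strong_induction_on generalizing l with
  | _ n ih =>
  rcases l.eq_nil_or_concat with rfl | ⟨l₀, s, rfl⟩
  · rfl
  obtain ⟨δ, hδ, rfl⟩ := hl s (by simp)
  have hl₀ : ∀ s ∈ l₀, s ∈ rootReflection '' Δ := fun s hs => hl s (by simp [hs])
  have hprod : (l₀.concat (rootReflection δ)).prod = l₀.prod * rootReflection δ := by simp
  -- the last letter sends `δ` to `-δ`, so `l₀` sends `δ` to a negative root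
  have hneg : l₀.prod δ ∉ positiveRoots W p := fun h => by
    have hδ' := hpos (hΔ.subset_positiveRoots hδ)
    rw [hprod, LinearIsometryEquiv.coe_mul, Function.comp_apply, rootReflection_self,
      map_neg] at hδ'
    have := inner_neg_left (𝕜 := ℝ) (l₀.prod δ) p
    linarith [hδ'.2, h.2]
  obtain ⟨l', hl', hlen, hprod'⟩ := hΔ.exists_shorter_word hp hδ l₀ hl₀ hneg
  rw [hprod, ← hprod'] at hpos ⊢
  exact ih l'.length (by simp at hn; omega) l' hl' hpos rfl

end IsSimpleSystem_s7

theorem eq_one_of_isRegularPoint (hW : (W : Set (E ≃ₗᵢ[ℝ] E)).Finite)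
    (hWgen : W = Subgroup.closure {r : E ≃ₗᵢ[ℝ] E | r ∈ W ∧ IsReflection r})
    (hp : IsRegularPoint W p) {w : E ≃ₗᵢ[ℝ] E} (hw : w ∈ W) (hwp : w p = p) : w = 1 := by
  obtain ⟨Δ, hΔ⟩ := exists_isSimpleSystem_s7 hW p
  refine hΔ.eq_one_of_mapsTo hp (hΔ.le_closure hp hW hWgen hw) fun β hβ =>
    ⟨apply_mem_unitRoots hw hβ.1, ?_⟩
  rw [← hwp, w.inner_map_map]
  exact hβ.2

def fixedSpace (w : E ≃ₗᵢ[ℝ] E) : Submodule ℝ E :=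
  LinearMap.ker ((w : E →ₗ[ℝ] E) - LinearMap.id)

theorem mem_fixedSpace {w : E ≃ₗᵢ[ℝ] E} {v : E} : v ∈ fixedSpace w ↔ w v = v := by
  simp [fixedSpace, sub_eq_zero]

theorem apply_sub_mem_orthogonal_fixedSpace (w : E ≃ₗᵢ[ℝ] E) (v : E) :
    w v - v ∈ (fixedSpace w)ᗮ := by
  refine (mem_orthogonal _ _).mpr fun f hf => ?_
  nth_rewrite 1 [inner_sub_right, ← mem_fixedSpace.mp hf]
  rw [w.inner_map_map, sub_self]

theorem exists_apply_sub_eq_of_mem_orthogonal [FiniteDimensional ℝ E] {w : E ≃ₗᵢ[ℝ] E} {α : E}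
    (hα : α ∈ (fixedSpace w)ᗮ) : ∃ v, w v - v = α := by
  have hle : LinearMap.range ((w : E →ₗ[ℝ] E) - LinearMap.id) ≤ (fixedSpace w)ᗮ := by
    rintro _ ⟨v, rfl⟩
    exact apply_sub_mem_orthogonal_fixedSpace w v
  have h₁ : Module.finrank ℝ (LinearMap.range ((w : E →ₗ[ℝ] E) - LinearMap.id)) +
      Module.finrank ℝ (fixedSpace w) = Module.finrank ℝ E :=
    LinearMap.finrank_range_add_finrank_ker _
  have h₂ := (fixedSpace w).finrank_add_finrank_orthogonal
  obtain ⟨v, hv⟩ := (eq_of_le_of_finrank_eq hle (by omega)).ge hα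
  exact ⟨v, hv⟩

theorem finrank_orthogonal_lt_of_lt [FiniteDimensional ℝ E] {K L : Submodule ℝ E} (h : K < L) :
    Module.finrank ℝ Lᗮ < Module.finrank ℝ Kᗮ := by
  have := finrank_lt_finrank_of_lt h
  have := K.finrank_add_finrank_orthogonal
  have := L.finrank_add_finrank_orthogonal
  omega

theorem fixedSpace_lt_fixedSpace_rootReflection_mul {w : E ≃ₗᵢ[ℝ] E} {v : E} (hv : w v ≠ v) :
    fixedSpace w < fixedSpace (rootReflection (w v - v) * w) := by
  have hv' : v ∈ fixedSpace (rootReflection (w v - v) * w) :=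
    mem_fixedSpace.mpr (reflection_sub (w.norm_map v))
  refine lt_of_le_of_ne (fun f hf => ?_) fun h => hv (mem_fixedSpace.mp (h ▸ hv'))
  have hf' := mem_fixedSpace.mp hf
  refine mem_fixedSpace.mpr ?_
  change rootReflection (w v - v) (w f) = f
  rw [hf', rootReflection_apply_eq_self_iff]
  exact inner_left_of_mem_orthogonal hf (apply_sub_mem_orthogonal_fixedSpace w v)

theorem exists_unitRoot_mem_orthogonal_fixedSpace (hW : (W : Set (E ≃ₗᵢ[ℝ] E)).Finite)
    (hWgen : W = Subgroup.closure {r : E ≃ₗᵢ[ℝ] E | r ∈ W ∧ IsReflection r})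
    {w : E ≃ₗᵢ[ℝ] E} (hw : w ∈ W) (hw1 : w ≠ 1) : ∃ α ∈ unitRoots W, α ∈ (fixedSpace w)ᗮ := by
  by_contra! h
  obtain ⟨p, hpF, hp⟩ := exists_mem_forall_inner_ne_zero (fixedSpace w) (unitRoots_finite hW) h
  exact hw1 (eq_one_of_isRegularPoint hW hWgen hp hw (mem_fixedSpace.mp hpF))

/-- Steinberg's theorem. -/
theorem pointwiseStabilizer_eq_closure [FiniteDimensional ℝ E]
    (hW : (W : Set (E ≃ₗᵢ[ℝ] E)).Finite)
    (hWgen : W = Subgroup.closure {r : E ≃ₗᵢ[ℝ] E | r ∈ W ∧ IsReflection r}) (s : Set E) :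
    pointwiseStabilizer W s = Subgroup.closure (reflectionsIn W ∩ pointwiseStabilizer W s) := by
  refine le_antisymm (fun w hw => ?_) ((Subgroup.closure_le _).mpr Set.inter_subset_right)
  induction hn : Module.finrank ℝ (fixedSpace w)ᗮ using Nat.strong_induction_on
    generalizing w with
  | _ n ih =>
  by_cases hw1 : w = 1
  · exact hw1 ▸ one_mem _
  obtain ⟨α, hα, hαF⟩ := exists_unitRoot_mem_orthogonal_fixedSpace hW hWgen hw.1 hw1
  obtain ⟨v, rfl⟩ := exists_apply_sub_eq_of_mem_orthogonal hαF
  have hv : w v ≠ v := fun h => by simp [h, unitRoots] at hα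
  have hr : rootReflection (w v - v) ∈ reflectionsIn W ∩ pointwiseStabilizer W s := by
    refine ⟨⟨hα.2, isReflection_iff.mpr ⟨_, sub_ne_zero.mpr hv, rfl⟩⟩, hα.2, fun x hx => ?_⟩
    exact rootReflection_apply_eq_self_iff.mpr
      (inner_left_of_mem_orthogonal (mem_fixedSpace.mpr (hw.2 x hx)) hαF)
  have hlt := finrank_orthogonal_lt_of_lt (fixedSpace_lt_fixedSpace_rootReflection_mul hv)
  have hrw := ih _ (hn ▸ hlt) _ (mul_mem hr.2 hw) rfl
  convert mul_mem (Subgroup.subset_closure hr) hrw using 1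
  rw [← mul_assoc, rootReflection_mul_self, one_mul]

variable (W) in
def rootsIn (U : Subgroup (E ≃ₗᵢ[ℝ] E)) : Set E :=
  {α | α ≠ 0 ∧ rootReflection α ∈ W ∧ rootReflection α ∈ U}

theorem pointwiseStabilizer_anti {s t : Set E} (h : s ⊆ t) :
    pointwiseStabilizer W t ≤ pointwiseStabilizer W s :=
  fun _ hw => ⟨hw.1, fun v hv => hw.2 v (h hv)⟩

theorem forall_commute_and_ne_iff {α : E} (hα : α ≠ 0) (U : Subgroup (E ≃ₗᵢ[ℝ] E)) :
    (∀ s ∈ reflectionsIn W, s ∈ U → rootReflection α * s = s * rootReflection α ∧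
      rootReflection α ≠ s) ↔ ∀ β ∈ rootsIn W U, rootReflection α β = β := by
  constructor
  · rintro h β ⟨hβ, hβW, hβU⟩
    exact (rootReflection_apply_eq_self_iff_commute_and_ne hα β).mpr
      (h _ ⟨hβW, isReflection_iff.mpr ⟨β, hβ, rfl⟩⟩ hβU)
  · rintro h s ⟨hsW, hs⟩ hsU
    obtain ⟨β, hβ, rfl⟩ := isReflection_iff.mp hs
    exact (rootReflection_apply_eq_self_iff_commute_and_ne hα β).mp (h β ⟨hβ, hsW, hsU⟩)

theorem orthogonalComplement_le_pointwiseStabilizer (U : Subgroup (E ≃ₗᵢ[ℝ] E)) :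
    orthogonalComplement W U ≤ pointwiseStabilizer W (rootsIn W U) := by
  refine (Subgroup.closure_le _).mpr ?_
  rintro t ⟨⟨htW, ht⟩, h⟩
  obtain ⟨α, hα, rfl⟩ := isReflection_iff.mp ht
  exact ⟨htW, (forall_commute_and_ne_iff hα U).mp h⟩

theorem orthogonalComplement_eq_pointwiseStabilizer [FiniteDimensional ℝ E]
    (hW : (W : Set (E ≃ₗᵢ[ℝ] E)).Finite)
    (hWgen : W = Subgroup.closure {r : E ≃ₗᵢ[ℝ] E | r ∈ W ∧ IsReflection r})
    (U : Subgroup (E ≃ₗᵢ[ℝ] E)) :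
    orthogonalComplement W U = pointwiseStabilizer W (rootsIn W U) := by
  refine le_antisymm (orthogonalComplement_le_pointwiseStabilizer U) ?_
  rw [pointwiseStabilizer_eq_closure hW hWgen, Subgroup.closure_le]
  rintro t ⟨⟨htW, ht⟩, -, hfix⟩
  obtain ⟨α, hα, rfl⟩ := isReflection_iff.mp ht
  exact Subgroup.subset_closure ⟨⟨htW, ht⟩, (forall_commute_and_ne_iff hα U).mpr hfix⟩

theorem closure_reflectionsIn_inter_le (U : Subgroup (E ≃ₗᵢ[ℝ] E)) :
    Subgroup.closure (reflectionsIn W ∩ U) ≤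
      orthogonalComplement W (orthogonalComplement W U) := by
  rw [Subgroup.closure_le]
  rintro t ⟨⟨htW, ht⟩, htU⟩
  obtain ⟨α, hα, rfl⟩ := isReflection_iff.mp ht
  refine Subgroup.subset_closure ⟨⟨htW, ht⟩, (forall_commute_and_ne_iff hα _).mpr ?_⟩
  rintro β ⟨-, -, hβ⟩
  exact rootReflection_apply_eq_self_comm.mpr
    ((orthogonalComplement_le_pointwiseStabilizer U hβ).2 α ⟨hα, htW, htU⟩)

theorem subset_rootsIn_orthogonalComplement {R : Set E}
    (hR : ∀ α ∈ R, α ≠ 0 ∧ rootReflection α ∈ W) :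
    R ⊆ rootsIn W (orthogonalComplement W (pointwiseStabilizer W R)) := by
  intro α hαR
  obtain ⟨hα, hαW⟩ := hR α hαR
  refine ⟨hα, hαW, Subgroup.subset_closure ⟨⟨hαW, isReflection_iff.mpr ⟨α, hα, rfl⟩⟩, ?_⟩⟩
  refine (forall_commute_and_ne_iff hα _).mpr fun β hβ => ?_
  exact rootReflection_apply_eq_self_comm.mpr (hβ.2.2.2 α hαR)

end

theorem orthogonally_closed_iff_pointwiseStabilizer_of_roots_general
    (W : Subgroup (V ≃ₗᵢ[ℝ] V))
    (hWfin : (W : Set (V ≃ₗᵢ[ℝ] V)).Finite)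
    (hWgen : W = Subgroup.closure {r : V ≃ₗᵢ[ℝ] V | r ∈ W ∧ IsReflection r})
    (P : Subgroup (V ≃ₗᵢ[ℝ] V)) :
    orthogonalComplement W (orthogonalComplement W P) = P ↔
      ∃ R : Set V,
        (∀ α ∈ R, α ≠ 0 ∧ ∃ r : V ≃ₗᵢ[ℝ] V, r ∈ W ∧ r α = -α ∧
          ∀ v : V, ⟪α, v⟫ = 0 → r v = v) ∧
        P = pointwiseStabilizer W R := by
  simp only [← eq_rootReflection_iff, exists_eq_right]
  constructor
  · intro h
    refine ⟨rootsIn W (orthogonalComplement W P), fun α hα => ⟨hα.1, hα.2.1⟩, ?_⟩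
    exact h.symm.trans (orthogonalComplement_eq_pointwiseStabilizer hWfin hWgen _)
  · rintro ⟨R, hR, rfl⟩
    refine le_antisymm ?_ ((pointwiseStabilizer_eq_closure hWfin hWgen R).le.trans
      (closure_reflectionsIn_inter_le _))
    rw [orthogonalComplement_eq_pointwiseStabilizer hWfin hWgen]
    exact pointwiseStabilizer_anti (subset_rootsIn_orthogonalComplement hR)

/-- A parabolic subgroup `P` of `W` is orthogonally closed (`P°° = P`) iff `P` is the
pointwise stabilizer of a set of roots of `W`. -/
theorem orthogonally_closed_iff_pointwiseStabilizer_of_roots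
    (W : Subgroup (V ≃ₗᵢ[ℝ] V))
    (hWfin : (W : Set (V ≃ₗᵢ[ℝ] V)).Finite)
    (hWgen : W = Subgroup.closure {r : V ≃ₗᵢ[ℝ] V | r ∈ W ∧ IsReflection r})
    (P : Subgroup (V ≃ₗᵢ[ℝ] V)) (X₀ : Submodule ℝ V)
    (hP : P = pointwiseStabilizer W (X₀ : Set V)) :
    orthogonalComplement W (orthogonalComplement W P) = P ↔
      ∃ R : Set V,
        (∀ α ∈ R, α ≠ 0 ∧ ∃ r : V ≃ₗᵢ[ℝ] V, r ∈ W ∧ r α = -α ∧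
          ∀ v : V, ⟪α, v⟫ = 0 → r v = v) ∧
        P = pointwiseStabilizer W R :=
  orthogonally_closed_iff_pointwiseStabilizer_of_roots_general W hWfin hWgen P
end

section
/- Let P be a parabolic subgroup of W, X = Fix_V(P), Q = Z_W(X^⊥), Y = Fix_V(Q), and N = N_W(P). Then X^⊥ ≤ Y and Y^⊥ ≤ X; the three subspaces X^⊥, X ∩ Y, and Y^⊥ are pairwise orthogonal and their sum is all of V; and each of the three subspaces X^⊥, X ∩ Y, Y^⊥ is mapped onto itself by every element of N. -/
open scoped RealInnerProductSpace

variable {V : Type*} [NormedAddCommGroup V] [InnerProductSpace ℝ V] [FiniteDimensional ℝ V]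

/-- The fixed-point subspace of a subgroup `U` of the isometry group of `V`. -/
def fixedSubmodule (U : Subgroup (V ≃ₗᵢ[ℝ] V)) : Submodule ℝ V where
  carrier := {v | ∀ u ∈ U, u v = v}
  zero_mem' := fun u _ => map_zero u
  add_mem' := fun {a b} ha hb u hu => by rw [map_add, ha u hu, hb u hu]
  smul_mem' := fun c v hv u hu => by rw [map_smul, hv u hu]

/-!
Since `Q` fixes `Xᗮ` pointwise, `Xᗮ ≤ Y`, hence `Yᗮ ≤ X`, and the modular law splits
`V = Xᗮ ⊕ X` further as `Xᗮ ⊕ (X ⊓ Y) ⊕ Yᗮ`. Conjugation by `n` transports fixed spaces and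
pointwise stabilizers, so `n ∈ N_W(P)` preserves `X = Fix(P)` and with it `Xᗮ`; therefore `n`
normalizes `Q = Z_W(Xᗮ)`, and so preserves `Y = Fix(Q)` and `Yᗮ`.
-/

theorem LinearIsometryEquiv.image_orthogonal_of_image_eq {𝕜 E : Type*} [RCLike 𝕜]
    [NormedAddCommGroup E] [InnerProductSpace 𝕜 E] (f : E ≃ₗᵢ[𝕜] E) {K : Submodule 𝕜 E}
    (h : f '' K = K) : f '' Kᗮ = Kᗮ := by
  have hK : K.map (f.toLinearEquiv : E →ₗ[𝕜] E) = K := SetLike.coe_injective (by simpa using h)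
  simpa [hK] using congrArg ((↑) : Submodule 𝕜 E → Set E) (K.map_orthogonal_equiv f)

theorem Submodule.orthogonal_sup_inf_sup_orthogonal_eq_top {𝕜 E : Type*} [RCLike 𝕜]
    [NormedAddCommGroup E] [InnerProductSpace 𝕜 E] {K L : Submodule 𝕜 E}
    [K.HasOrthogonalProjection] [L.HasOrthogonalProjection] (h : Lᗮ ≤ K) :
    Kᗮ ⊔ (K ⊓ L) ⊔ Lᗮ = ⊤ := by
  rw [sup_assoc, inf_sup_assoc_of_le _ h, sup_orthogonal_of_hasOrthogonalProjection, inf_top_eq,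
    sup_comm, sup_orthogonal_of_hasOrthogonalProjection]

section

variable {E : Type*} [NormedAddCommGroup E] [InnerProductSpace ℝ E]

theorem subset_fixedSubmodule_pointwiseStabilizer (W : Subgroup (E ≃ₗᵢ[ℝ] E)) (s : Set E) :
    s ⊆ fixedSubmodule (pointwiseStabilizer W s) :=
  fun v hv _ hw => hw.2 v hv

theorem image_fixedSubmodule (n : E ≃ₗᵢ[ℝ] E) (U : Subgroup (E ≃ₗᵢ[ℝ] E)) :
    n '' fixedSubmodule U = fixedSubmodule (U.map (MulAut.conj n).toMonoidHom) := by
  ext v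
  rw [LinearIsometryEquiv.image_eq_preimage_symm]
  simp [fixedSubmodule, ← n.eq_symm_apply]

theorem image_fixedSubmodule_of_mem_normalizer {U : Subgroup (E ≃ₗᵢ[ℝ] E)} {n : E ≃ₗᵢ[ℝ] E}
    (hn : n ∈ Subgroup.normalizer (U : Set (E ≃ₗᵢ[ℝ] E))) :
    n '' fixedSubmodule U = fixedSubmodule U := by
  have hU : U.map (MulAut.conj n).toMonoidHom = U := Subgroup.mem_normalizer_iff_map_conj_eq.mp hn
  rw [image_fixedSubmodule, hU]

theorem pointwiseStabilizer_image {W : Subgroup (E ≃ₗᵢ[ℝ] E)} {n : E ≃ₗᵢ[ℝ] E} (hn : n ∈ W)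
    (s : Set E) :
    pointwiseStabilizer W (n '' s) = (pointwiseStabilizer W s).map (MulAut.conj n).toMonoidHom := by
  ext w
  rw [Subgroup.mem_map_equiv]
  simp [pointwiseStabilizer, n.symm_apply_eq, hn, Subgroup.mul_mem_cancel_left,
    Subgroup.mul_mem_cancel_right]

theorem mem_normalizer_pointwiseStabilizer {W : Subgroup (E ≃ₗᵢ[ℝ] E)} {n : E ≃ₗᵢ[ℝ] E}
    (hn : n ∈ W) {s : Set E} (hs : n '' s = s) :
    n ∈ Subgroup.normalizer (pointwiseStabilizer W s : Set (E ≃ₗᵢ[ℝ] E)) :=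
  Subgroup.mem_normalizer_iff_map_conj_eq.mpr (hs ▸ pointwiseStabilizer_image hn s).symm

end

theorem triple_orthogonal_decomposition_general
    (W : Subgroup (V ≃ₗᵢ[ℝ] V))
    (P : Subgroup (V ≃ₗᵢ[ℝ] V))
    (X : Submodule ℝ V) (hX : X = fixedSubmodule P)
    (Q : Subgroup (V ≃ₗᵢ[ℝ] V)) (hQ : Q = pointwiseStabilizer W ((Xᗮ : Submodule ℝ V) : Set V))
    (Y : Submodule ℝ V) (hY : Y = fixedSubmodule Q)
    (N : Subgroup (V ≃ₗᵢ[ℝ] V)) (hN : N = W ⊓ Subgroup.normalizer (P : Set (V ≃ₗᵢ[ℝ] V))) :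
    (Xᗮ ≤ Y ∧ Yᗮ ≤ X) ∧
    (Xᗮ ⟂ (X ⊓ Y) ∧ Xᗮ ⟂ Yᗮ ∧ (X ⊓ Y) ⟂ Yᗮ) ∧
    (Xᗮ ⊔ (X ⊓ Y) ⊔ Yᗮ = (⊤ : Submodule ℝ V)) ∧
    (∀ n ∈ N,
      (n '' ((Xᗮ : Submodule ℝ V) : Set V) = ((Xᗮ : Submodule ℝ V) : Set V)) ∧
      (n '' ((X ⊓ Y : Submodule ℝ V) : Set V) = ((X ⊓ Y : Submodule ℝ V) : Set V)) ∧
      (n '' ((Yᗮ : Submodule ℝ V) : Set V) = ((Yᗮ : Submodule ℝ V) : Set V))) := by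
  have hXY : Xᗮ ≤ Y := hY ▸ hQ ▸ subset_fixedSubmodule_pointwiseStabilizer W _
  have hYX : Yᗮ ≤ X := Submodule.orthogonal_le_iff_orthogonal_le.mp hXY
  refine ⟨⟨hXY, hYX⟩,
    ⟨X.isOrtho_orthogonal_right.symm.mono_right inf_le_left,
      X.isOrtho_orthogonal_right.symm.mono_right hYX,
      Y.isOrtho_orthogonal_right.mono_left inf_le_right⟩,
    Submodule.orthogonal_sup_inf_sup_orthogonal_eq_top hYX, fun n hn => ?_⟩
  obtain ⟨hnW, hnP⟩ : n ∈ W ∧ n ∈ Subgroup.normalizer (P : Set (V ≃ₗᵢ[ℝ] V)) :=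
    Subgroup.mem_inf.mp (hN ▸ hn)
  have hnX : n '' X = X := hX ▸ image_fixedSubmodule_of_mem_normalizer hnP
  have hnXperp : n '' Xᗮ = Xᗮ := n.image_orthogonal_of_image_eq hnX
  have hnQ : n ∈ Subgroup.normalizer (Q : Set (V ≃ₗᵢ[ℝ] V)) :=
    hQ ▸ mem_normalizer_pointwiseStabilizer hnW hnXperp
  have hnY : n '' Y = Y := hY ▸ image_fixedSubmodule_of_mem_normalizer hnQ
  refine ⟨hnXperp, ?_, n.image_orthogonal_of_image_eq hnY⟩
  rw [Submodule.coe_inf, Set.image_inter n.injective, hnX, hnY]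

/-- The triple orthogonal decomposition `V = Xᗮ ⊕ (X ⊓ Y) ⊕ Yᗮ` of `N_W(P)`-stable
subspaces, where `X = Fix_V(P)`, `Q = Z_W(Xᗮ)` and `Y = Fix_V(Q)`. -/
theorem triple_orthogonal_decomposition
    (W : Subgroup (V ≃ₗᵢ[ℝ] V))
    (hWfin : (W : Set (V ≃ₗᵢ[ℝ] V)).Finite)
    (hWgen : W = Subgroup.closure {r : V ≃ₗᵢ[ℝ] V | r ∈ W ∧ IsReflection r})
    (P : Subgroup (V ≃ₗᵢ[ℝ] V)) (X₀ : Submodule ℝ V)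
    (hP : P = pointwiseStabilizer W (X₀ : Set V))
    (X : Submodule ℝ V) (hX : X = fixedSubmodule P)
    (Q : Subgroup (V ≃ₗᵢ[ℝ] V)) (hQ : Q = pointwiseStabilizer W ((Xᗮ : Submodule ℝ V) : Set V))
    (Y : Submodule ℝ V) (hY : Y = fixedSubmodule Q)
    (N : Subgroup (V ≃ₗᵢ[ℝ] V)) (hN : N = W ⊓ Subgroup.normalizer (P : Set (V ≃ₗᵢ[ℝ] V))) :
    (Xᗮ ≤ Y ∧ Yᗮ ≤ X) ∧
    (Xᗮ ⟂ (X ⊓ Y) ∧ Xᗮ ⟂ Yᗮ ∧ (X ⊓ Y) ⟂ Yᗮ) ∧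
    (Xᗮ ⊔ (X ⊓ Y) ⊔ Yᗮ = (⊤ : Submodule ℝ V)) ∧
    (∀ n ∈ N,
      (n '' ((Xᗮ : Submodule ℝ V) : Set V) = ((Xᗮ : Submodule ℝ V) : Set V)) ∧
      (n '' ((X ⊓ Y : Submodule ℝ V) : Set V) = ((X ⊓ Y : Submodule ℝ V) : Set V)) ∧
      (n '' ((Yᗮ : Submodule ℝ V) : Set V) = ((Yᗮ : Submodule ℝ V) : Set V))) :=
  triple_orthogonal_decomposition_general W P X hX Q hQ Y hY N hN
end

section
/- Let u ∈ W be an involution (u² = 1). Then the centralizer of u in W equals the normalizer in W of the parabolic subgroup P = Z_W(Fix_V(u)): C_W(u) = N_W(Z_W(Fix_V(u))). -/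
/-!
An isometric involution `u` is the orthogonal reflection in its fixed subspace `F`: it fixes `F`
and negates `Fᗮ`, because `m + u m` is both fixed by `u` and orthogonal to `F` whenever `m ∈ Fᗮ`.
So `u` is determined by `F`. Since `w⁻¹ u w` fixes exactly `w⁻¹ F`, an element `w` centralizes `u`
iff `w⁻¹ F = F`, which makes `w` normalize `Z_W(F)`. Conversely, if `w` normalizes `Z_W(F) ∋ u`, then
`w u w⁻¹` and `w⁻¹ u w` lie in `Z_W(F)`, which gives both inclusions between `F` and `w⁻¹ F`.
-/

open scoped RealInnerProductSpace

variable {V : Type*} [NormedAddCommGroup V] [InnerProductSpace ℝ V] [FiniteDimensional ℝ V]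

section FixedSubspace

variable {𝕜 E : Type*} [RCLike 𝕜] [NormedAddCommGroup E] [InnerProductSpace 𝕜 E]

def fixedSubspace (u : E ≃ₗᵢ[𝕜] E) : Submodule 𝕜 E :=
  LinearMap.eqLocus u.toLinearEquiv.toLinearMap LinearMap.id

@[simp]
lemma mem_fixedSubspace {u : E ≃ₗᵢ[𝕜] E} {x : E} : x ∈ fixedSubspace u ↔ u x = x :=
  Iff.rfl

variable {u v : E ≃ₗᵢ[𝕜] E}

lemma apply_apply_of_sq_eq_one (hu : u ^ 2 = 1) (x : E) : u (u x) = x :=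
  congr($hu x)

lemma sub_apply_mem_orthogonal_fixedSubspace (x : E) :
    x - u x ∈ (fixedSubspace u)ᗮ := by
  intro k hk
  rw [mem_fixedSubspace] at hk
  rw [inner_sub_right, ← u.inner_map_map k x, hk, sub_self]

lemma apply_eq_neg_of_mem_orthogonal_fixedSubspace (hu : u ^ 2 = 1) {m : E}
    (hm : m ∈ (fixedSubspace u)ᗮ) : u m = -m := by
  have hfix : m + u m ∈ fixedSubspace u := by
    rw [mem_fixedSubspace, map_add, apply_apply_of_sq_eq_one hu, add_comm]
  have horth : m + u m ∈ (fixedSubspace u)ᗮ := by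
    refine add_mem hm fun k hk => ?_
    rw [← u.inner_map_map, mem_fixedSubspace.mp hk, apply_apply_of_sq_eq_one hu]
    exact hm k hk
  exact eq_neg_of_add_eq_zero_right <| by
    simpa using (Submodule.inf_orthogonal_eq_bot (fixedSubspace u)).le ⟨hfix, horth⟩

lemma eq_of_fixedSubspace_eq (hu : u ^ 2 = 1) (hv : v ^ 2 = 1)
    (h : fixedSubspace u = fixedSubspace v) : u = v := by
  ext x
  have hplus : v (x + u x) = x + u x := by
    rw [← mem_fixedSubspace, ← h, mem_fixedSubspace, map_add, apply_apply_of_sq_eq_one hu,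
      add_comm]
  have hminus : v (x - u x) = -(x - u x) :=
    apply_eq_neg_of_mem_orthogonal_fixedSubspace hv (h ▸ sub_apply_mem_orthogonal_fixedSubspace x)
  have : (2 : 𝕜) • v x = (2 : 𝕜) • u x := by
    rw [map_add] at hplus; rw [map_sub] at hminus
    linear_combination (norm := module) hplus + hminus
  exact (smul_right_injective E two_ne_zero this).symm

lemma preimage_fixedSubspace (w u : E ≃ₗᵢ[𝕜] E) :
    w ⁻¹' fixedSubspace u = fixedSubspace (w⁻¹ * u * w) := by
  ext x
  simp only [Set.mem_preimage, SetLike.mem_coe, mem_fixedSubspace, LinearIsometryEquiv.coe_mul,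
    LinearIsometryEquiv.coe_inv, Function.comp_apply, w.symm_apply_eq]

lemma conj_eq_iff_preimage_fixedSubspace_eq {w : E ≃ₗᵢ[𝕜] E} (hu : u ^ 2 = 1) :
    w⁻¹ * u * w = u ↔ w ⁻¹' fixedSubspace u = fixedSubspace u := by
  rw [preimage_fixedSubspace, SetLike.coe_set_eq]
  refine ⟨fun h => by rw [h], eq_of_fixedSubspace_eq ?_ hu⟩
  rw [show (w⁻¹ * u * w) ^ 2 = w⁻¹ * u ^ 2 * w by simp [sq, mul_assoc], hu]
  group

end FixedSubspace

section PointwiseStabilizer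

variable {E : Type*} [NormedAddCommGroup E] [InnerProductSpace ℝ E]
  {W : Subgroup (E ≃ₗᵢ[ℝ] E)} {s : Set E} {w : E ≃ₗᵢ[ℝ] E}

lemma conj_mem_pointwiseStabilizer_iff (hw : w ∈ W) {h : E ≃ₗᵢ[ℝ] E} :
    w * h * w⁻¹ ∈ pointwiseStabilizer W s ↔ h ∈ pointwiseStabilizer W (w ⁻¹' s) := by
  refine and_congr (by rw [Subgroup.mul_mem_cancel_right W (W.inv_mem hw),
    Subgroup.mul_mem_cancel_left W hw]) ⟨fun hfix x hx => ?_, fun hfix x hx => ?_⟩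
  · simpa using congrArg w.symm (hfix (w x) hx)
  · simpa using congrArg w (hfix (w.symm x) (by simpa using hx))

lemma mem_normalizer_pointwiseStabilizer_of_preimage_eq (hw : w ∈ W) (hs : w ⁻¹' s = s) :
    w ∈ Subgroup.normalizer (pointwiseStabilizer W s : Set (E ≃ₗᵢ[ℝ] E)) :=
  Subgroup.mem_normalizer_iff.mpr fun _ => by rw [conj_mem_pointwiseStabilizer_iff hw, hs]

lemma preimage_subset_of_mem_normalizer_pointwiseStabilizer (hw : w ∈ W)
    (hn : w ∈ Subgroup.normalizer (pointwiseStabilizer W s : Set (E ≃ₗᵢ[ℝ] E)))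
    {g : E ≃ₗᵢ[ℝ] E} (hg : g ∈ pointwiseStabilizer W s) :
    w ⁻¹' s ⊆ {x | g x = x} :=
  ((conj_mem_pointwiseStabilizer_iff hw).mp ((Subgroup.mem_normalizer_iff.mp hn g).mp hg)).2

lemma preimage_fixedSubspace_eq_of_mem_normalizer {u : E ≃ₗᵢ[ℝ] E} (hu : u ∈ W) (hw : w ∈ W)
    (hn : w ∈ Subgroup.normalizer
      (pointwiseStabilizer W (fixedSubspace u) : Set (E ≃ₗᵢ[ℝ] E))) :
    w ⁻¹' fixedSubspace u = fixedSubspace u := by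
  have huP : u ∈ pointwiseStabilizer W (fixedSubspace u) := ⟨hu, fun _ hx => hx⟩
  refine (preimage_subset_of_mem_normalizer_pointwiseStabilizer hw hn huP).antisymm
    fun x hx => ?_
  refine preimage_subset_of_mem_normalizer_pointwiseStabilizer (W.inv_mem hw) (inv_mem hn) huP ?_
  simpa using hx

end PointwiseStabilizer

theorem centralizer_involution_eq_normalizer_parabolic_general
    (W : Subgroup (V ≃ₗᵢ[ℝ] V))
    (u : V ≃ₗᵢ[ℝ] V) (hu : u ∈ W) (hu2 : u ^ 2 = 1) :
    W ⊓ Subgroup.centralizer {u}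
      = W ⊓ Subgroup.normalizer (pointwiseStabilizer W {v : V | u v = v} : Set (V ≃ₗᵢ[ℝ] V)) := by
  ext w
  simp only [Subgroup.mem_inf, and_congr_right_iff]
  intro hw
  change _ ↔ w ∈ Subgroup.normalizer (pointwiseStabilizer W (fixedSubspace u) : Set _)
  calc w ∈ Subgroup.centralizer {u} ↔ w⁻¹ * u * w = u := by
        rw [Subgroup.mem_centralizer_singleton_iff, mul_assoc, inv_mul_eq_iff_eq_mul, eq_comm]
    _ ↔ w ⁻¹' fixedSubspace u = fixedSubspace u := conj_eq_iff_preimage_fixedSubspace_eq hu2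
    _ ↔ _ := ⟨mem_normalizer_pointwiseStabilizer_of_preimage_eq hw,
        preimage_fixedSubspace_eq_of_mem_normalizer hu hw⟩

/-- The centralizer of an involution `u ∈ W` is the normalizer in `W` of the parabolic
subgroup `Z_W(Fix_V(u))`. -/
theorem centralizer_involution_eq_normalizer_parabolic
    (W : Subgroup (V ≃ₗᵢ[ℝ] V))
    (hWfin : (W : Set (V ≃ₗᵢ[ℝ] V)).Finite)
    (hWgen : W = Subgroup.closure {r : V ≃ₗᵢ[ℝ] V | r ∈ W ∧ IsReflection r})
    (u : V ≃ₗᵢ[ℝ] V) (hu : u ∈ W) (hu2 : u ^ 2 = 1) :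
    W ⊓ Subgroup.centralizer {u}
      = W ⊓ Subgroup.normalizer (pointwiseStabilizer W {v : V | u v = v} : Set (V ≃ₗᵢ[ℝ] V)) :=
  centralizer_involution_eq_normalizer_parabolic_general W u hu hu2
end

section
/- Suppose the map −id_V belongs to W, and let u ∈ W be an involution (u² = 1), so that −u := (−id_V)∘u is also an involution in W. Let P = Z_W(Fix_V(u)). Then the orthogonal complement Z_W(Fix_V(P)^⊥) of P equals Z_W(Fix_V(−u)), the pointwise stabilizer of the fixed-point subspace of −u. -/
open scoped RealInnerProductSpace

variable {V : Type*} [NormedAddCommGroup V] [InnerProductSpace ℝ V] [FiniteDimensional ℝ V]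

/-- If `-1 ∈ W` and `u ∈ W` is an involution with associated parabolic
`P = Z_W(Fix_V(u))`, then the orthogonal complement `Z_W(Fix_V(P)ᗮ)` of `P` equals
`Z_W(Fix_V(-u))`. -/
theorem orthogonalComplement_of_involution_parabolic
    (W : Subgroup (V ≃ₗᵢ[ℝ] V))
    (hWfin : (W : Set (V ≃ₗᵢ[ℝ] V)).Finite)
    (hWgen : W = Subgroup.closure {r : V ≃ₗᵢ[ℝ] V | r ∈ W ∧ IsReflection r})
    (hneg : (LinearIsometryEquiv.neg ℝ : V ≃ₗᵢ[ℝ] V) ∈ W)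
    (u : V ≃ₗᵢ[ℝ] V) (hu : u ∈ W) (hu2 : u ^ 2 = 1)
    (P : Subgroup (V ≃ₗᵢ[ℝ] V)) (hP : P = pointwiseStabilizer W {v : V | u v = v}) :
    pointwiseStabilizer W (((fixedSubmodule P)ᗮ : Submodule ℝ V) : Set V)
      = pointwiseStabilizer W
          {v : V | ((LinearIsometryEquiv.neg ℝ : V ≃ₗᵢ[ℝ] V) * u) v = v} := by
  subst hP
  have hu2' : ∀ x : V, u (u x) = x := by
    intro x
    have := congrArg (fun f : V ≃ₗᵢ[ℝ] V => f x) hu2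
    simpa [pow_two] using this
  have hfix : ∀ v : V, v ∈ fixedSubmodule (pointwiseStabilizer W {v : V | u v = v})
      ↔ u v = v := by
    intro v
    constructor
    · intro h
      exact h u ⟨hu, fun x hx => hx⟩
    · intro h w hw
      exact hw.2 v h
  have hset : (((fixedSubmodule (pointwiseStabilizer W {v : V | u v = v}))ᗮ :
        Submodule ℝ V) : Set V)
      = {v : V | ((LinearIsometryEquiv.neg ℝ : V ≃ₗᵢ[ℝ] V) * u) v = v} := by
    ext v
    have hneg' : ((LinearIsometryEquiv.neg ℝ : V ≃ₗᵢ[ℝ] V) * u) v = -(u v) := rfl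
    simp only [SetLike.mem_coe, Submodule.mem_orthogonal, Set.mem_setOf_eq, hneg']
    constructor
    · intro h
      set a : V := (2:ℝ)⁻¹ • (v + u v) with ha
      have haFix : u a = a := by
        simp only [ha, map_smul, map_add, hu2' v]
        rw [add_comm]
      have h0 : ⟪a, v⟫ = 0 := h a ((hfix a).2 haFix)
      have hab : ⟪a, v - a⟫ = 0 := by
        have h1 : ⟪v + u v, v - u v⟫ = 0 := by
          have huv : ⟪u v, u v⟫ = ⟪v, v⟫ := u.inner_map_map v v
          rw [inner_add_left, inner_sub_right, inner_sub_right, huv,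
            real_inner_comm (u v) v]
          ring
        have hva : v - a = (2:ℝ)⁻¹ • (v - u v) := by
          rw [ha, smul_add, smul_sub]
          module
        rw [ha, hva, real_inner_smul_left, real_inner_smul_right, h1]
        ring
      have haa : ⟪a, a⟫ = 0 := by
        have := inner_sub_right (𝕜 := ℝ) a v a
        rw [hab, h0] at this
        linarith
      have ha0 : a = 0 := inner_self_eq_zero.mp haa
      have : v + u v = 0 := by
        have := congrArg (fun x : V => (2:ℝ) • x) ha0
        simpa [ha, smul_smul] using this
      linear_combination (norm := abel) -this
    · intro h w hw
      have huv : u v = -v := by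
        have := congrArg Neg.neg h
        simpa using this
      have hfw : u w = w := (hfix w).1 hw
      have : ⟪w, v⟫ = -⟪w, v⟫ := by
        conv_lhs => rw [← u.inner_map_map w v, hfw, huv, inner_neg_right]
      linarith
  rw [hset]
end

section
/- Let t = swap(i, j) be the transposition of two distinct points i, j of α. Then t commutes with, and differs from, every transposition contained in the Young-type subgroup P — that is, for every s ∈ P that is a transposition one has s·t = t·s and s ≠ t — if and only if both i and j lie in singleton fibres of f, i.e., for all k, f(k) = f(i) implies k = i, and f(k) = f(j) implies k = j. -/
/-- The Young-type subgroup of `Equiv.Perm α` associated to `f : α → ι`: the permutations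
preserving every fibre of `f` (the pointwise stabilizer of the fibre partition of `f`). -/
def youngSubgroup {α ι : Type*} (f : α → ι) : Subgroup (Equiv.Perm α) where
  carrier := {σ | ∀ a : α, f (σ a) = f a}
  one_mem' := fun _ => rfl
  mul_mem' := fun {σ τ} hσ hτ a => (hσ (τ a)).trans (hτ a)
  inv_mem' := fun {σ} hσ a => by
    have h := hσ (σ⁻¹ a)
    rw [show σ (σ⁻¹ a) = a from σ.apply_symm_apply a] at h
    exact h.symm

/-! Two distinct transpositions commute exactly when they move disjoint pairs of points, and
the transpositions in `youngSubgroup f` are those of two points in one fibre of `f`. -/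

open Equiv

section

variable {α : Type*} [DecidableEq α]

theorem Equiv.eq_of_commute_swap_swap {a b c : α} (hba : b ≠ a) (hca : c ≠ a)
    (h : Commute (swap a b) (swap a c)) : b = c := by
  by_contra hbc
  have h_at_c := congr($h c)
  simp only [Perm.mul_apply, swap_apply_right, swap_apply_left,
    swap_apply_of_ne_of_ne hca (Ne.symm hbc)] at h_at_c
  exact hba h_at_c

theorem Equiv.left_ne_of_commute_swap_swap {a b i j : α} (hab : a ≠ b) (hij : i ≠ j)
    (hc : Commute (swap a b) (swap i j)) (hne : swap a b ≠ swap i j) : a ≠ i ∧ a ≠ j := by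
  constructor
  · rintro rfl
    exact hne (congrArg _ (eq_of_commute_swap_swap hab.symm hij.symm hc))
  · rintro rfl
    rw [swap_comm i a] at hc hne
    exact hne (congrArg _ (eq_of_commute_swap_swap hab.symm hij hc))

theorem Equiv.Perm.disjoint_swap_swap_of_ne {a b i j : α} (hai : a ≠ i) (haj : a ≠ j)
    (hbi : b ≠ i) (hbj : b ≠ j) : Perm.Disjoint (swap a b) (swap i j) := by
  intro x
  rcases eq_or_ne x a with rfl | hxa
  · exact Or.inr (swap_apply_of_ne_of_ne hai haj)
  rcases eq_or_ne x b with rfl | hxb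
  · exact Or.inr (swap_apply_of_ne_of_ne hbi hbj)
  · exact Or.inl (swap_apply_of_ne_of_ne hxa hxb)

theorem Equiv.commute_swap_swap_and_ne_iff {a b i j : α} (hab : a ≠ b) (hij : i ≠ j) :
    Commute (swap a b) (swap i j) ∧ swap a b ≠ swap i j ↔ a ≠ i ∧ a ≠ j ∧ b ≠ i ∧ b ≠ j := by
  constructor
  · rintro ⟨hc, hne⟩
    obtain ⟨hai, haj⟩ := left_ne_of_commute_swap_swap hab hij hc hne
    rw [swap_comm a b] at hc hne
    obtain ⟨hbi, hbj⟩ := left_ne_of_commute_swap_swap hab.symm hij hc hne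
    exact ⟨hai, haj, hbi, hbj⟩
  · rintro ⟨hai, haj, hbi, hbj⟩
    refine ⟨(Perm.disjoint_swap_swap_of_ne hai haj hbi hbj).commute, fun h => hab ?_⟩
    simpa [swap_apply_of_ne_of_ne hai haj] using congr($h a).symm

variable {ι : Type*} (f : α → ι)

theorem swap_mem_youngSubgroup_iff {a b : α} : swap a b ∈ youngSubgroup f ↔ f a = f b := by
  refine ⟨fun h => by simpa using (h a).symm, fun h x => ?_⟩
  rcases eq_or_ne x a with rfl | hxa
  · rw [swap_apply_left]; exact h.symm
  rcases eq_or_ne x b with rfl | hxb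
  · rw [swap_apply_right]; exact h
  · rw [swap_apply_of_ne_of_ne hxa hxb]

theorem forall_isSwap_mem_youngSubgroup_iff {p : Perm α → Prop} :
    (∀ s ∈ youngSubgroup f, s.IsSwap → p s) ↔ ∀ a b, a ≠ b → f a = f b → p (swap a b) := by
  constructor
  · exact fun h a b hab hf => h _ ((swap_mem_youngSubgroup_iff f).2 hf) ⟨a, b, hab, rfl⟩
  · rintro h s hs ⟨a, b, hab, rfl⟩
    exact h a b hab ((swap_mem_youngSubgroup_iff f).1 hs)

end

theorem swap_perp_young_iff_general {α ι : Type*} [DecidableEq α]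
    (f : α → ι) (i j : α) (hij : i ≠ j) :
    (∀ s ∈ youngSubgroup f, s.IsSwap →
        s * Equiv.swap i j = Equiv.swap i j * s ∧ s ≠ Equiv.swap i j) ↔
      ((∀ k, f k = f i → k = i) ∧ (∀ k, f k = f j → k = j)) := by
  rw [forall_isSwap_mem_youngSubgroup_iff]
  constructor
  · intro h
    refine ⟨fun k hk => by_contra fun hki => ?_, fun k hk => by_contra fun hkj => ?_⟩
    · exact ((commute_swap_swap_and_ne_iff (Ne.symm hki) hij).1
        (h i k (Ne.symm hki) hk.symm)).1 rfl
    · exact ((commute_swap_swap_and_ne_iff (Ne.symm hkj) hij).1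
        (h j k (Ne.symm hkj) hk.symm)).2.1 rfl
  · rintro ⟨hi, hj⟩ a b hab hfab
    refine (commute_swap_swap_and_ne_iff hab hij).2 ⟨?_, ?_, ?_, ?_⟩ <;> rintro rfl
    · exact hab (hi b hfab.symm).symm
    · exact hab (hj b hfab.symm).symm
    · exact hab (hi a hfab)
    · exact hab (hj a hfab)

/-- The transposition `swap i j` commutes with, and differs from, every transposition in
the Young subgroup `P` iff both `i` and `j` lie in singleton fibres of `f`. -/
theorem swap_perp_young_iff {α ι : Type*} [DecidableEq α] [DecidableEq ι] [Fintype α]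
    (f : α → ι) (i j : α) (hij : i ≠ j) :
    (∀ s ∈ youngSubgroup f, s.IsSwap →
        s * Equiv.swap i j = Equiv.swap i j * s ∧ s ≠ Equiv.swap i j) ↔
      ((∀ k, f k = f i → k = i) ∧ (∀ k, f k = f j → k = j)) :=
  swap_perp_young_iff_general f i j hij
end

section
/- Assume f : α → ι is surjective and let N be the normalizer of P in Perm(α). Let K be the subgroup of Perm(ι) consisting of those permutations τ such that for every label l ∈ ι the fibre f⁻¹(l) and the fibre f⁻¹(τ(l)) have the same cardinality. Then the quotient group N / P is isomorphic to K. (In the classical language: the quotient of the normalizer of a Young subgroup W_λ of the symmetric group S_n by W_λ is isomorphic to the direct product ∏_k S_{a_k}, where a_k is the number of parts of λ equal to k.) -/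
/-- The subgroup of `Equiv.Perm ι` of permutations `τ` such that for every label `l`
the fibres `f⁻¹(l)` and `f⁻¹(τ l)` have the same cardinality. -/
def fibreCardSubgroup {α ι : Type*} (f : α → ι) : Subgroup (Equiv.Perm ι) where
  carrier := {τ | ∀ l : ι, Nat.card {a : α // f a = l} = Nat.card {a : α // f a = τ l}}
  one_mem' := fun _ => rfl
  mul_mem' := fun {σ τ} hσ hτ l => (hτ l).trans (hσ (τ l))
  inv_mem' := fun {τ} hτ l => by
    have h := hτ (τ⁻¹ l)
    rw [show τ (τ⁻¹ l) = l from τ.apply_symm_apply l] at h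
    exact h.symm

instance {α ι : Type*} (f : α → ι) :
    ((youngSubgroup f).subgroupOf (Subgroup.normalizer (youngSubgroup f : Set (Equiv.Perm α)))).Normal :=
  Subgroup.normal_in_normalizer

/-!
An element `σ` of the normalizer maps fibres of `f` to fibres: conjugating the transposition of
two points of one fibre gives the transposition of their images, which lies in `P` again. Since
`f` is surjective, `σ` therefore induces a permutation `τ` of the labels with `f ∘ σ = τ ∘ f`;
conversely every such `σ` normalizes `P`. Mapping `σ ↦ τ` is a homomorphism with kernel `P`,
and `τ` arises from some `σ` exactly when the fibre cardinalities are `τ`-invariant, because a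
permutation covering `τ` is the same as a family of bijections between the fibres over `l` and
over `τ l`.
-/

open Equiv Function Subgroup

section Young

variable {α ι : Type*} {f : α → ι}

theorem mem_youngSubgroup_iff {σ : Perm α} : σ ∈ youngSubgroup f ↔ ∀ a, f (σ a) = f a :=
  Iff.rfl

theorem swap_mem_youngSubgroup [DecidableEq α] {a b : α} (h : f a = f b) :
    swap a b ∈ youngSubgroup f := by
  intro x
  rw [swap_apply_def]
  split_ifs with hxa hxb <;> simp_all

theorem mem_normalizer_youngSubgroup_of_semiconj {σ : Perm α} {τ : Perm ι}
    (h : ∀ a, f (σ a) = τ (f a)) : σ ∈ normalizer (youngSubgroup f : Set (Perm α)) := by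
  refine mem_normalizer_iff.mpr fun p => ⟨fun hp a => ?_, fun hp a => τ.injective ?_⟩
  · rw [Perm.mul_apply, Perm.mul_apply, h, hp, ← h, Perm.coe_inv, apply_symm_apply]
  · simpa only [Perm.mul_apply, Perm.coe_inv, symm_apply_apply, h] using hp (σ a)

theorem apply_eq_apply_of_mem_normalizer_youngSubgroup {σ : Perm α}
    (hσ : σ ∈ normalizer (youngSubgroup f : Set (Perm α))) {a b : α} (h : f a = f b) :
    f (σ a) = f (σ b) := by
  classical
  have hconj := (mem_normalizer_iff.mp hσ (swap a b)).mp (swap_mem_youngSubgroup h) (σ a)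
  simp only [Perm.mul_apply, Perm.coe_inv, symm_apply_apply, swap_apply_left] at hconj
  exact hconj.symm

theorem semiconj_mem_fibreCardSubgroup {σ : Perm α} {τ : Perm ι}
    (h : ∀ a, f (σ a) = τ (f a)) : τ ∈ fibreCardSubgroup f := fun l =>
  Nat.card_congr (σ.subtypeEquiv fun a => by rw [h, τ.apply_eq_iff_eq])

theorem exists_semiconj_of_mem_fibreCardSubgroup [Finite α] {τ : Perm ι}
    (hτ : τ ∈ fibreCardSubgroup f) : ∃ σ : Perm α, ∀ a, f (σ a) = τ (f a) := by
  have e : ∀ l, {a // f a = l} ≃ {a // f a = τ l} := fun l => (Finite.card_eq.mp (hτ l)).some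
  refine ⟨(sigmaFiberEquiv f).symm.trans ((sigmaCongrRight e).trans
    ((sigmaCongrLeft (β := fun l => {a // f a = l}) τ).trans (sigmaFiberEquiv f))), fun a => ?_⟩
  exact (e (f a) ⟨a, rfl⟩).2

variable (hf : Surjective f)

noncomputable def labelHom : normalizer (youngSubgroup f : Set (Perm α)) →* Perm ι :=
  Perm.equivUnitsEnd.symm.toMonoidHom.comp <| MonoidHom.toHomUnits
    { toFun := fun σ l => f (σ.1 (surjInv hf l))
      map_one' := funext (surjInv_eq hf)
      map_mul' := fun σ _ => funext fun _ =>
        apply_eq_apply_of_mem_normalizer_youngSubgroup σ.2 (surjInv_eq hf _).symm }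

theorem labelHom_apply_apply (σ : normalizer (youngSubgroup f : Set (Perm α))) (a : α) :
    labelHom hf σ (f a) = f (σ.1 a) :=
  apply_eq_apply_of_mem_normalizer_youngSubgroup σ.2 (surjInv_eq hf _)

theorem labelHom_eq_of_semiconj {σ : normalizer (youngSubgroup f : Set (Perm α))} {τ : Perm ι}
    (h : ∀ a, f (σ.1 a) = τ (f a)) : labelHom hf σ = τ := by
  ext l
  obtain ⟨a, rfl⟩ := hf l
  rw [labelHom_apply_apply, h]

theorem ker_labelHom :
    (labelHom hf).ker =
      (youngSubgroup f).subgroupOf (normalizer (youngSubgroup f : Set (Perm α))) := by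
  ext σ
  rw [MonoidHom.mem_ker, mem_subgroupOf, mem_youngSubgroup_iff]
  refine ⟨fun h a => ?_, fun h => labelHom_eq_of_semiconj hf h⟩
  rw [← labelHom_apply_apply hf, h, Perm.one_apply]

theorem range_labelHom [Finite α] : (labelHom hf).range = fibreCardSubgroup f := by
  ext τ
  refine ⟨?_, fun hτ => ?_⟩
  · rintro ⟨σ, rfl⟩
    exact semiconj_mem_fibreCardSubgroup fun a => (labelHom_apply_apply hf σ a).symm
  · obtain ⟨σ, hσ⟩ := exists_semiconj_of_mem_fibreCardSubgroup hτ
    exact ⟨⟨σ, mem_normalizer_youngSubgroup_of_semiconj hσ⟩, labelHom_eq_of_semiconj hf hσ⟩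

end Young

theorem normalizer_young_quotient_iso_general {α ι : Type*} [Fintype α]
    (f : α → ι) (hf : Function.Surjective f) :
    Nonempty
      ((Subgroup.normalizer (youngSubgroup f : Set (Equiv.Perm α)) ⧸
          (youngSubgroup f).subgroupOf (Subgroup.normalizer (youngSubgroup f : Set (Equiv.Perm α))))
        ≃* fibreCardSubgroup f) :=
  ⟨(QuotientGroup.quotientMulEquivOfEq (ker_labelHom hf).symm).trans <|
    (QuotientGroup.quotientKerEquivRange _).trans (MulEquiv.subgroupCongr (range_labelHom hf))⟩

/-- The quotient of the normalizer `N` of the Young subgroup `P` by `P` is isomorphic to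
the group of permutations of the labels preserving the fibre cardinalities
(classically, `N_{S_n}(W_λ)/W_λ ≅ ∏ₖ S_{aₖ}`). -/
theorem normalizer_young_quotient_iso {α ι : Type*} [Fintype α] [Fintype ι]
    [DecidableEq α] [DecidableEq ι] (f : α → ι) (hf : Function.Surjective f) :
    Nonempty
      ((Subgroup.normalizer (youngSubgroup f : Set (Equiv.Perm α)) ⧸
          (youngSubgroup f).subgroupOf (Subgroup.normalizer (youngSubgroup f : Set (Equiv.Perm α))))
        ≃* fibreCardSubgroup f) :=
  normalizer_young_quotient_iso_general f hf
end
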